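/- arXiv:2504.12242 — 8 statements merged into one kernel-verified Lean document; each statement's English description precedes it below -/
import Mathlib

section
/- Let p be an odd prime and d an integer with p ∤ d such that the Legendre symbol (d/p) equals 1. Then in ℤ[√d][X] the polynomial P(x) = ∏_{1 ≤ m,n ≤ p-1, p ∤ m²−dn²} (x − (m + n√d)) satisfies P(x) ≡ (x^{p−1} − 1)^{p−3} (mod p), i.e., every coefficient of P(x) − (x^{p−1} − 1)^{p−3} is divisible by p in ℤ[√d]. -/
open Polynomial Finset

variable {p : ℕ} [Fact p.Prime]

lemma zmodTwoNeZero (hodd : Odd p) : (2 : ZMod p) ≠ 0 := by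
  have : ((2 : ℕ) : ZMod p) ≠ 0 := by
    rw [Ne, ZMod.natCast_eq_zero_iff]
    intro h
    have h1 := Nat.le_of_dvd two_pos h
    have h2 := (Fact.out : p.Prime).two_le
    have h3 := Nat.odd_iff.mp hodd
    omega
  simpa using this

lemma fiber_card (hodd : Odd p) {dz r a : ZMod p} (hr : r * r = dz) (hr0 : r ≠ 0)
    (ha : a ≠ 0) :
    (((univ ×ˢ univ : Finset (ZMod p × ZMod p)).filter
        (fun xy => xy.1 ≠ 0 ∧ xy.2 ≠ 0 ∧ xy.1 ^ 2 - dz * xy.2 ^ 2 ≠ 0)).filter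
        (fun xy => xy.1 + xy.2 * r = a)).card = p - 3 := by
  have h2 : (2 : ZMod p) ≠ 0 := zmodTwoNeZero hodd
  have h2r : 2 * r ≠ 0 := mul_ne_zero h2 hr0
  have hfact : ∀ x y : ZMod p, x ^ 2 - dz * y ^ 2 = (x + y * r) * (x - y * r) := by
    intro x y; rw [← hr]; ring
  have hcard : (({0, a / r, a / (2 * r)} : Finset (ZMod p)))ᶜ.card = p - 3 := by
    rw [Finset.card_compl]
    have hne1 : (0 : ZMod p) ≠ a / r := (div_ne_zero ha hr0).symm
    have hne2 : (0 : ZMod p) ≠ a / (2 * r) := (div_ne_zero ha h2r).symm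
    have hne3 : a / r ≠ a / (2 * r) := by
      intro h
      rw [div_eq_div_iff hr0 h2r] at h
      have : (2 : ZMod p) * r = r := mul_left_cancel₀ ha h
      apply hr0
      have := sub_eq_zero.mpr this
      calc r = 2 * r - r := by ring
        _ = 0 := this
    rw [Finset.card_insert_of_notMem (by simp [hne1, hne2]),
      Finset.card_insert_of_notMem (by simp [hne3]), Finset.card_singleton, ZMod.card]
  rw [← hcard]
  apply Finset.card_nbij' (fun xy => xy.2) (fun y => (a - y * r, y))
  · rintro ⟨x, y⟩ hxy
    simp only [Finset.mem_coe, Finset.mem_filter, Finset.mem_product, Finset.mem_univ, true_and] at hxy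
    obtain ⟨⟨hx0, hy0, hD⟩, hsum⟩ := hxy
    simp only [Finset.mem_coe, Finset.mem_compl, Finset.mem_insert, Finset.mem_singleton, not_or]
    refine ⟨hy0, ?_, ?_⟩
    · intro h
      apply hx0
      have : y * r = a := by rw [h, div_mul_cancel₀ _ hr0]
      linear_combination hsum - this
    · intro h
      apply hD
      rw [hfact]
      have hyra : 2 * (y * r) = a := by
        rw [h]; field_simp
      have : x - y * r = 0 := by linear_combination hsum - hyra
      rw [this, mul_zero]
  · intro y hy
    simp only [Finset.mem_coe, Finset.mem_compl, Finset.mem_insert, Finset.mem_singleton, not_or] at hy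
    obtain ⟨hy0, hy1, hy2⟩ := hy
    simp only [Finset.mem_coe, Finset.mem_filter, Finset.mem_product, Finset.mem_univ, true_and]
    have hx0 : a - y * r ≠ 0 := by
      intro h
      apply hy1
      field_simp
      linear_combination -h
    refine ⟨⟨hx0, hy0, ?_⟩, by ring⟩
    rw [hfact]
    have h1 : a - y * r + y * r = a := by ring
    rw [h1]
    apply mul_ne_zero ha
    intro h
    apply hy2
    field_simp
    linear_combination -h
  · rintro ⟨x, y⟩ hxy
    simp only [Finset.mem_coe, Finset.mem_filter, Finset.mem_product, Finset.mem_univ, true_and] at hxy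
    have : x = a - y * r := by linear_combination hxy.2
    simp [← this]
  · intro y _; rfl
lemma prod_univ_X_sub_C : ∏ a : ZMod p, (X - C a) = X ^ p - X := by
  have hq : Fintype.card (ZMod p) = p := ZMod.card p
  have hroots := FiniteField.roots_X_pow_card_sub_X (ZMod p)
  rw [hq] at hroots
  have hmonic : (X ^ p - X : (ZMod p)[X]).Monic := by
    apply monic_X_pow_sub
    simpa using (Fact.out : p.Prime).one_lt
  have hdeg : (X ^ p - X : (ZMod p)[X]).natDegree = p := by
    have := FiniteField.X_pow_card_sub_X_natDegree_eq (ZMod p) (Fact.out : p.Prime).one_lt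
    exact this
  have := prod_multiset_X_sub_C_of_monic_of_roots_card_eq hmonic
    (by rw [hroots, hdeg]; simpa using hq)
  rw [hroots] at this
  rw [Finset.prod, ← this]

lemma prod_nonzero_X_sub_C : ∏ a ∈ ({0}ᶜ : Finset (ZMod p)), (X - C a) = X ^ (p - 1) - 1 := by
  have h1 : p - 1 + 1 = p := Nat.succ_pred_eq_of_pos (Fact.out : p.Prime).pos
  have h2 : (X : (ZMod p)[X]) * ∏ a ∈ ({0}ᶜ : Finset (ZMod p)), (X - C a)
      = X * (X ^ (p - 1) - 1) := by
    rw [mul_sub, mul_one, ← pow_succ', h1]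
    have h3 : ∏ a : ZMod p, (X - C a) = (X - C (0 : ZMod p)) * ∏ a ∈ ({0}ᶜ : Finset (ZMod p)), (X - C a) := by
      rw [show (univ : Finset (ZMod p)) = insert 0 ({0}ᶜ : Finset (ZMod p)) by
          simpa using (Finset.insert_compl_self (0 : ZMod p)).symm,
        Finset.prod_insert (by simp : (0 : ZMod p) ∉ ({0}ᶜ : Finset (ZMod p)))]
    rw [← prod_univ_X_sub_C (p := p), h3, C_0, sub_zero]
  exact mul_left_cancel₀ X_ne_zero h2

lemma key_prod (hodd : Odd p) {dz r : ZMod p} (hr : r * r = dz) (hr0 : r ≠ 0) :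
    ∏ xy ∈ (univ ×ˢ univ : Finset (ZMod p × ZMod p)).filter
        (fun xy => xy.1 ≠ 0 ∧ xy.2 ≠ 0 ∧ xy.1 ^ 2 - dz * xy.2 ^ 2 ≠ 0),
      (X - C (xy.1 + xy.2 * r)) = (X ^ (p - 1) - 1 : (ZMod p)[X]) ^ (p - 3) := by
  have hfact : ∀ x y : ZMod p, x ^ 2 - dz * y ^ 2 = (x + y * r) * (x - y * r) := by
    intro x y; rw [← hr]; ring
  rw [← Finset.prod_fiberwise_of_maps_to (g := fun xy : ZMod p × ZMod p => xy.1 + xy.2 * r)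
      (t := ({0}ᶜ : Finset (ZMod p)))
      (by
        rintro ⟨x, y⟩ hxy
        simp only [Finset.mem_filter, Finset.mem_product, Finset.mem_univ, true_and] at hxy
        simp only [Finset.mem_compl, Finset.mem_singleton]
        intro h
        exact hxy.2.2 (by rw [hfact, h, zero_mul]))]
  rw [← prod_nonzero_X_sub_C (p := p), ← Finset.prod_pow]
  apply Finset.prod_congr rfl
  intro a ha
  simp only [Finset.mem_compl, Finset.mem_singleton] at ha
  trans ∏ _xy ∈ ((univ ×ˢ univ : Finset (ZMod p × ZMod p)).filter
        (fun xy => xy.1 ≠ 0 ∧ xy.2 ≠ 0 ∧ xy.1 ^ 2 - dz * xy.2 ^ 2 ≠ 0)).filter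
        (fun xy => xy.1 + xy.2 * r = a), (X - C a)
  · exact Finset.prod_congr rfl (fun xy hxy => by
      simp only [Finset.mem_filter] at hxy
      rw [hxy.2])
  · rw [Finset.prod_const, fiber_card hodd hr hr0 ha]

lemma reindex {M : Type*} [CommMonoid M] (d : ℤ) (f : ZMod p × ZMod p → M) :
    ∏ mn ∈ (Finset.Icc (1 : ℤ) ((p : ℤ) - 1) ×ˢ Finset.Icc (1 : ℤ) ((p : ℤ) - 1)).filter
        (fun mn => ¬ (p : ℤ) ∣ (mn.1 ^ 2 - d * mn.2 ^ 2)),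
      f ((mn.1 : ZMod p), (mn.2 : ZMod p))
    = ∏ xy ∈ (univ ×ˢ univ : Finset (ZMod p × ZMod p)).filter
        (fun xy => xy.1 ≠ 0 ∧ xy.2 ≠ 0 ∧ xy.1 ^ 2 - (d : ZMod p) * xy.2 ^ 2 ≠ 0), f xy := by
  have hplt : 1 < p := (Fact.out : p.Prime).one_lt
  have hmem : ∀ m : ℤ, m ∈ Finset.Icc (1 : ℤ) ((p : ℤ) - 1) → (m : ZMod p) ≠ 0 := by
    intro m hm h0
    rw [Finset.mem_Icc] at hm
    rw [ZMod.intCast_zmod_eq_zero_iff_dvd] at h0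
    have := Int.le_of_dvd (by omega) h0
    omega
  have hD : ∀ m n : ℤ, (¬ (p : ℤ) ∣ (m ^ 2 - d * n ^ 2)) ↔
      ((m : ZMod p) ^ 2 - (d : ZMod p) * (n : ZMod p) ^ 2 ≠ 0) := by
    intro m n
    rw [Ne, ← ZMod.intCast_zmod_eq_zero_iff_dvd]
    push_cast
    tauto
  have hval : ∀ x : ZMod p, (((x.val : ℤ) : ZMod p)) = x := by
    intro x
    push_cast
    simp [ZMod.natCast_val, ZMod.cast_id]
  apply Finset.prod_nbij' (fun mn => ((mn.1 : ZMod p), (mn.2 : ZMod p)))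
    (fun xy => ((xy.1.val : ℤ), (xy.2.val : ℤ)))
  · rintro ⟨m, n⟩ hmn
    simp only [Finset.mem_filter, Finset.mem_product] at hmn ⊢
    obtain ⟨⟨hm, hn⟩, hdvd⟩ := hmn
    exact ⟨⟨mem_univ _, mem_univ _⟩ , hmem m hm, hmem n hn, (hD m n).mp hdvd⟩
  · rintro ⟨x, y⟩ hxy
    simp only [Finset.mem_filter, Finset.mem_product, Finset.mem_univ, true_and] at hxy
    obtain ⟨hx, hy, hD'⟩ := hxy
    simp only [Finset.mem_filter, Finset.mem_product, Finset.mem_Icc]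
    have hxv : x.val ≠ 0 := fun h => hx (by rwa [ZMod.val_eq_zero] at h)
    have hyv : y.val ≠ 0 := fun h => hy (by rwa [ZMod.val_eq_zero] at h)
    have hxlt := ZMod.val_lt x
    have hylt := ZMod.val_lt y
    refine ⟨⟨⟨by omega, by omega⟩, ⟨by omega, by omega⟩⟩, ?_⟩
    rw [hD]
    rwa [hval, hval]
  · rintro ⟨m, n⟩ hmn
    simp only [Finset.mem_filter, Finset.mem_product, Finset.mem_Icc] at hmn
    obtain ⟨⟨⟨hm1, hm2⟩, ⟨hn1, hn2⟩⟩, _⟩ := hmn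
    have h1 : ((m : ZMod p).val : ℤ) = m := by
      rw [ZMod.val_intCast]
      exact Int.emod_eq_of_lt (by omega) (by omega)
    have h2 : ((n : ZMod p).val : ℤ) = n := by
      rw [ZMod.val_intCast]
      exact Int.emod_eq_of_lt (by omega) (by omega)
    simp [h1, h2]
  · rintro ⟨x, y⟩ _
    simp [hval]
  · rintro ⟨m, n⟩ _
    rfl

lemma ker_lemma (hodd : Odd p) {d : ℤ} {r : ZMod p} (hr0 : r ≠ 0) {c : Zsqrtd d}
    (h1 : (c.re : ZMod p) + (c.im : ZMod p) * r = 0)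
    (h2 : (c.re : ZMod p) - (c.im : ZMod p) * r = 0) : (p : Zsqrtd d) ∣ c := by
  have h2' := zmodTwoNeZero (p := p) hodd
  have hre : (c.re : ZMod p) = 0 := by
    have h : 2 * (c.re : ZMod p) = 0 := by linear_combination h1 + h2
    rcases mul_eq_zero.mp h with h | h
    · exact absurd h h2'
    · exact h
  have him : (c.im : ZMod p) = 0 := by
    have h : 2 * ((c.im : ZMod p) * r) = 0 := by linear_combination h1 - h2
    rcases mul_eq_zero.mp h with h | h
    · exact absurd h h2'
    · rcases mul_eq_zero.mp h with h | h
      · exact h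
      · exact absurd h hr0
  have : ((p : ℤ) : Zsqrtd d) ∣ c := by
    rw [Zsqrtd.intCast_dvd]
    constructor <;> rw [← ZMod.intCast_zmod_eq_zero_iff_dvd] <;> assumption
  simpa using this

theorem stmt_0 (p : ℕ) [Fact p.Prime] (hodd : Odd p) (d : ℤ) (hd : ¬ (p : ℤ) ∣ d)
    (hleg : legendreSym p d = 1) :
    (p : (Zsqrtd d)[X]) ∣
      (∏ mn ∈ (Finset.Icc (1 : ℤ) ((p : ℤ) - 1) ×ˢ Finset.Icc (1 : ℤ) ((p : ℤ) - 1)).filter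
          (fun mn => ¬ (p : ℤ) ∣ (mn.1 ^ 2 - d * mn.2 ^ 2)),
        (X - C (⟨mn.1, mn.2⟩ : Zsqrtd d)))
      - (X ^ (p - 1) - 1) ^ (p - 3) := by
  have hd0 : ((d : ℤ) : ZMod p) ≠ 0 := by rwa [Ne, ZMod.intCast_zmod_eq_zero_iff_dvd]
  obtain ⟨r, hr⟩ : IsSquare ((d : ℤ) : ZMod p) := (legendreSym.eq_one_iff p hd0).mp hleg
  have hr' : r * r = ((d : ℤ) : ZMod p) := hr.symm
  have hr0 : r ≠ 0 := fun h => hd0 (by rw [hr, h, mul_zero])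
  set F : (Zsqrtd d)[X] :=
      (∏ mn ∈ (Finset.Icc (1 : ℤ) ((p : ℤ) - 1) ×ˢ Finset.Icc (1 : ℤ) ((p : ℤ) - 1)).filter
          (fun mn => ¬ (p : ℤ) ∣ (mn.1 ^ 2 - d * mn.2 ^ 2)),
        (X - C (⟨mn.1, mn.2⟩ : Zsqrtd d)))
      - (X ^ (p - 1) - 1) ^ (p - 3) with hF
  have hmap : ∀ (r' : ZMod p), r' * r' = ((d : ℤ) : ZMod p) → r' ≠ 0 →
      ∀ hrr : r' * r' = ((d : ℤ) : ZMod p),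
      Polynomial.map (Zsqrtd.lift ⟨r', hrr⟩) F = 0 := by
    intro r' hrr' hr'0 hrr
    rw [hF, Polynomial.map_sub, Polynomial.map_prod, Polynomial.map_pow, Polynomial.map_sub,
      Polynomial.map_pow, Polynomial.map_one, Polynomial.map_X]
    rw [sub_eq_zero]
    have hone : ∀ mn : ℤ × ℤ,
        Polynomial.map (Zsqrtd.lift ⟨r', hrr⟩) (X - C (⟨mn.1, mn.2⟩ : Zsqrtd d))
        = X - C ((mn.1 : ZMod p) + (mn.2 : ZMod p) * r') := by
      intro mn
      rw [Polynomial.map_sub, Polynomial.map_X, Polynomial.map_C]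
      simp [Zsqrtd.lift]
    rw [Finset.prod_congr rfl (fun mn _ => hone mn)]
    rw [reindex d (fun xy => X - C (xy.1 + xy.2 * r'))]
    exact key_prod hodd hrr hr'0
  rw [← Polynomial.C_eq_natCast, Polynomial.C_dvd_iff_dvd_coeff]
  intro i
  have h1 : (Zsqrtd.lift ⟨r, hr'⟩) (F.coeff i) = 0 := by
    rw [← Polynomial.coeff_map, hmap r hr' hr0 hr', Polynomial.coeff_zero]
  have hneg : -r * -r = ((d : ℤ) : ZMod p) := by rw [neg_mul_neg]; exact hr'
  have h2 : (Zsqrtd.lift ⟨-r, hneg⟩) (F.coeff i) = 0 := by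
    rw [← Polynomial.coeff_map, hmap (-r) hneg (neg_ne_zero.mpr hr0) hneg, Polynomial.coeff_zero]
  simp only [Zsqrtd.lift] at h1 h2
  apply ker_lemma hodd hr0 (c := F.coeff i)
  · exact h1
  · dsimp at h2
    linear_combination h2
end

section
/- Let p be an odd prime and d an integer with p ∤ d such that the Legendre symbol (d/p) equals 1. Then in ℤ[√d][X] the polynomial P(x) = ∏_{1 ≤ m,n ≤ p-1, p ∤ m²−dn²} (x − (m + n√d)) satisfies P(x) ≡ ∑_{k=1}^{p−2} (k(k+1)/2)·x^{(k−1)(p−1)} (mod p). -/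
open Polynomial Finset

lemma aux_prod_univ (p : ℕ) [Fact p.Prime] :
    ∏ u ∈ (univ : Finset (ZMod p)), (X - C u) = (X : (ZMod p)[X]) ^ p - X := by
  have hp : p.Prime := Fact.out
  have hp1 : 1 < p := hp.one_lt
  have hcard : Fintype.card (ZMod p) = p := ZMod.card p
  have hmonic : ((X : (ZMod p)[X]) ^ p - X).Monic := by
    have h : degree (X : (ZMod p)[X]) < (p : ℕ) := by
      rw [degree_X]
      exact_mod_cast hp1
    exact Polynomial.monic_X_pow_sub h
  have hroots : ((X : (ZMod p)[X]) ^ p - X).roots = (univ : Finset (ZMod p)).val := by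
    have := FiniteField.roots_X_pow_card_sub_X (ZMod p)
    rwa [hcard] at this
  have hdeg : ((X : (ZMod p)[X]) ^ p - X).natDegree = p :=
    FiniteField.X_pow_card_sub_X_natDegree_eq (ZMod p) hp1
  have := Polynomial.prod_multiset_X_sub_C_of_monic_of_roots_card_eq hmonic
    (by rw [hroots, hdeg]; simp [hcard])
  rw [hroots] at this
  rw [Finset.prod_eq_multiset_prod]
  exact this

lemma aux_prod_units (p : ℕ) [Fact p.Prime] :
    ∏ u ∈ (univ : Finset (ZMod p)).erase 0, (X - C u) = (X : (ZMod p)[X]) ^ (p - 1) - 1 := by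
  have hp1 : 1 < p := (Fact.out : p.Prime).one_lt
  have h0 : (X : (ZMod p)[X]) ≠ 0 := X_ne_zero
  apply mul_left_cancel₀ h0
  have h1 := aux_prod_univ p
  rw [← Finset.mul_prod_erase univ _ (mem_univ (0 : ZMod p))] at h1
  simp only [C_0, sub_zero] at h1
  rw [h1, mul_sub, mul_one, ← pow_succ', Nat.sub_add_cancel hp1.le]

lemma aux_choose (p : ℕ) [Fact p.Prime] (j : ℕ) (hj : j ≤ p - 3) :
    (2 : ZMod p) * ((p - 3).choose j : ZMod p) =
      (-1) ^ j * ((j : ZMod p) + 1) * ((j : ZMod p) + 2) := by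
  have hp : p.Prime := Fact.out
  have hp1 : 1 < p := hp.one_lt
  induction j with
  | zero => simp
  | succ j IH =>
    have hj' : j ≤ p - 3 := by omega
    have IH' := IH hj'
    have hlt : j + 1 < p := by omega
    have hne : ((j : ZMod p) + 1) ≠ 0 := by
      have : (((j + 1 : ℕ)) : ZMod p) ≠ 0 := by
        rw [Ne, ZMod.natCast_eq_zero_iff]
        intro hdvd
        have := Nat.le_of_dvd (by omega) hdvd
        omega
      simpa using this
    have key := congrArg (Nat.cast : ℕ → ZMod p) (Nat.choose_succ_right_eq (p - 3) j)
    have hsub : (p - 3 - j : ℕ) = p - (3 + j) := by omega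
    have hcast : ((p - 3 - j : ℕ) : ZMod p) = -((j : ZMod p) + 3) := by
      rw [hsub, Nat.cast_sub (by omega), ZMod.natCast_self]
      push_cast
      ring
    push_cast at key
    rw [hcast] at key
    apply mul_left_cancel₀ hne
    push_cast
    calc ((j : ZMod p) + 1) * (2 * ((p - 3).choose (j+1) : ZMod p))
        = 2 * (((p - 3).choose (j+1) : ZMod p) * ((j : ZMod p) + 1)) := by ring
      _ = 2 * (((p - 3).choose j : ZMod p) * (-((j : ZMod p) + 3))) := by rw [key]
      _ = (2 * ((p - 3).choose j : ZMod p)) * (-((j : ZMod p) + 3)) := by ring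
      _ = ((-1) ^ j * ((j : ZMod p) + 1) * ((j : ZMod p) + 2)) * (-((j : ZMod p) + 3)) := by
          rw [IH']
      _ = ((j : ZMod p) + 1) * ((-1) ^ (j+1) * ((j : ZMod p) + 1 + 1) * ((j : ZMod p) + 1 + 2)) := by
          ring

lemma aux_sum (p : ℕ) [Fact p.Prime] (hodd : Odd p) :
    ∑ k ∈ Icc 1 (p - 2), C ((k * (k + 1) / 2 : ℕ) : ZMod p) * X ^ ((k - 1) * (p - 1)) =
      ((X : (ZMod p)[X]) ^ (p - 1) - 1) ^ (p - 3) := by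
  have hp : p.Prime := Fact.out
  obtain ⟨t, ht⟩ := hodd
  have hp3 : 3 ≤ p := by
    have := hp.two_le; omega
  have h2 : (2 : ZMod p) ≠ 0 := by
    have : ((2 : ℕ) : ZMod p) ≠ 0 := by
      rw [Ne, ZMod.natCast_eq_zero_iff]
      intro h
      have := Nat.le_of_dvd (by norm_num) h
      omega
    simpa using this
  rw [sub_pow]
  rw [show p - 3 + 1 = p - 2 by omega]
  refine Finset.sum_bij' (fun k _ => k - 1) (fun m _ => m + 1) ?_ ?_ ?_ ?_ ?_
  · intro a ha
    simp only [mem_Icc] at ha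
    simp only [mem_range]
    omega
  · intro a ha
    simp only [mem_range] at ha
    simp only [mem_Icc]
    omega
  · intro a ha
    simp only [mem_Icc] at ha
    omega
  · intro a ha
    omega
  · intro k hk
    simp only [mem_Icc] at hk
    obtain ⟨m, rfl⟩ : ∃ m, k = m + 1 := ⟨k - 1, by omega⟩
    have hm : m ≤ p - 3 := by omega
    rw [show m + 1 - 1 = m from rfl]
    have hsignconst : (((m + 1) * (m + 1 + 1) / 2 : ℕ) : ZMod p) =
        (-1 : ZMod p) ^ (m + (p - 3)) * ((p - 3).choose m : ZMod p) := by
      apply mul_left_cancel₀ h2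
      have hdvd : 2 ∣ (m + 1) * (m + 2) := (Nat.even_mul_succ_self (m + 1)).two_dvd
      have hnat : 2 * ((m + 1) * (m + 1 + 1) / 2) = (m + 1) * (m + 2) := by
        rw [show m + 1 + 1 = m + 2 from rfl, Nat.mul_div_cancel' hdvd]
      have hsign : (-1 : ZMod p) ^ (m + (p - 3)) * (-1 : ZMod p) ^ m = 1 := by
        rw [← pow_add]
        exact Even.neg_one_pow ⟨m + (t - 1), by omega⟩
      calc (2 : ZMod p) * (((m + 1) * (m + 1 + 1) / 2 : ℕ) : ZMod p)
          = ((2 * ((m + 1) * (m + 1 + 1) / 2) : ℕ) : ZMod p) := by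
            rw [Nat.cast_mul, Nat.cast_ofNat]
        _ = (((m + 1) * (m + 2) : ℕ) : ZMod p) := by rw [hnat]
        _ = ((m : ZMod p) + 1) * ((m : ZMod p) + 2) := by push_cast; ring
        _ = ((-1 : ZMod p) ^ (m + (p - 3)) * (-1 : ZMod p) ^ m) *
              (((m : ZMod p) + 1) * ((m : ZMod p) + 2)) := by rw [hsign, one_mul]
        _ = (-1 : ZMod p) ^ (m + (p - 3)) *
              ((-1 : ZMod p) ^ m * ((m : ZMod p) + 1) * ((m : ZMod p) + 2)) := by ring
        _ = (-1 : ZMod p) ^ (m + (p - 3)) * ((2 : ZMod p) * ((p - 3).choose m : ZMod p)) := by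
            rw [aux_choose p m hm]
        _ = 2 * ((-1 : ZMod p) ^ (m + (p - 3)) * ((p - 3).choose m : ZMod p)) := by ring
    rw [hsignconst, map_mul, map_pow, map_neg, map_one, Polynomial.C_eq_natCast,
      one_pow, ← pow_mul, mul_comm (p - 1) m]
    ring

lemma aux_prod (p : ℕ) [Fact p.Prime] (hodd : Odd p) (d : ℤ) (hd : ¬ (p : ℤ) ∣ d)
    (e : ZMod p) (he : e * e = (d : ZMod p)) :
    ∏ mn ∈ (Finset.Icc (1 : ℤ) ((p : ℤ) - 1) ×ˢ Finset.Icc (1 : ℤ) ((p : ℤ) - 1)).filter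
        (fun mn => ¬ (p : ℤ) ∣ (mn.1 ^ 2 - d * mn.2 ^ 2)),
      (X - C ((mn.1 : ZMod p) + (mn.2 : ZMod p) * e)) =
    ((X : (ZMod p)[X]) ^ (p - 1) - 1) ^ (p - 3) := by
  classical
  have hp : p.Prime := Fact.out
  obtain ⟨t, ht⟩ := hodd
  have hp3 : 3 ≤ p := by have := hp.two_le; omega
  haveI : NeZero p := ⟨by omega⟩
  have hdz : (d : ZMod p) ≠ 0 := by
    rw [Ne, ZMod.intCast_zmod_eq_zero_iff_dvd]; exact hd
  have he0 : e ≠ 0 := by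
    intro h; rw [h, mul_zero] at he; exact hdz he.symm
  have h2 : (2 : ZMod p) ≠ 0 := by
    have : ((2 : ℕ) : ZMod p) ≠ 0 := by
      rw [Ne, ZMod.natCast_eq_zero_iff]
      intro h; have := Nat.le_of_dvd (by norm_num) h; omega
    simpa using this
  have h2e : (2 : ZMod p) * e ≠ 0 := mul_ne_zero h2 he0
  have hmem_ne : ∀ m : ℤ, 1 ≤ m → m ≤ (p : ℤ) - 1 → ((m : ZMod p) ≠ 0) := by
    intro m h1 h2'
    rw [Ne, ZMod.intCast_zmod_eq_zero_iff_dvd]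
    intro hdvd
    have := Int.le_of_dvd (by omega) hdvd
    omega
  have hvalcast : ∀ a : ZMod p, (((a.val : ℤ) : ZMod p) = a) := by
    intro a; push_cast; simp [ZMod.natCast_val, ZMod.cast_id]
  have hval : ∀ a : ZMod p, a ≠ 0 → (1 ≤ ((a.val : ℤ)) ∧ ((a.val : ℤ)) ≤ (p : ℤ) - 1) := by
    intro a ha
    have h1 : a.val ≠ 0 := fun h => ha (by rwa [ZMod.val_eq_zero] at h)
    have h2' : a.val < p := ZMod.val_lt a
    constructor
    · exact_mod_cast Nat.one_le_iff_ne_zero.mpr h1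
    · push_cast; omega
  have hfactor : ∀ m n : ℤ, ((m ^ 2 - d * n ^ 2 : ℤ) : ZMod p) =
      ((m : ZMod p) + (n : ZMod p) * e) * ((m : ZMod p) - (n : ZMod p) * e) := by
    intro m n; push_cast; rw [← he]; ring
  have hcond : ∀ m n : ℤ, (¬ (p : ℤ) ∣ (m ^ 2 - d * n ^ 2)) ↔
      (((m : ZMod p) + (n : ZMod p) * e) ≠ 0 ∧ ((m : ZMod p) - (n : ZMod p) * e) ≠ 0) := by
    intro m n
    constructor
    · intro h
      have hcast : ((m ^ 2 - d * n ^ 2 : ℤ) : ZMod p) ≠ 0 :=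
        fun hc => h ((ZMod.intCast_zmod_eq_zero_iff_dvd _ p).mp hc)
      rw [hfactor] at hcast
      exact mul_ne_zero_iff.mp hcast
    · rintro ⟨h1, h2'⟩ hdvd
      have hcast : ((m ^ 2 - d * n ^ 2 : ℤ) : ZMod p) = 0 :=
        (ZMod.intCast_zmod_eq_zero_iff_dvd _ p).mpr hdvd
      rw [hfactor] at hcast
      rcases mul_eq_zero.mp hcast with h | h
      exacts [h1 h, h2' h]
  -- Step A: reindex to T
  set T : Finset (ZMod p × ZMod p) := univ.filter
    (fun ub => ub.2 ≠ 0 ∧ ub.1 ≠ 0 ∧ ub.1 ≠ ub.2 * e ∧ ub.1 ≠ 2 * (ub.2 * e)) with hT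
  have stepA : ∏ mn ∈ (Finset.Icc (1 : ℤ) ((p : ℤ) - 1) ×ˢ Finset.Icc (1 : ℤ) ((p : ℤ) - 1)).filter
        (fun mn => ¬ (p : ℤ) ∣ (mn.1 ^ 2 - d * mn.2 ^ 2)),
      (X - C ((mn.1 : ZMod p) + (mn.2 : ZMod p) * e)) = ∏ ub ∈ T, (X - C ub.1) := by
    refine Finset.prod_nbij'
      (fun mn => ((mn.1 : ZMod p) + (mn.2 : ZMod p) * e, (mn.2 : ZMod p)))
      (fun ub => (((ub.1 - ub.2 * e).val : ℤ), ((ub.2.val : ℤ))))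
      ?_ ?_ ?_ ?_ ?_
    · rintro ⟨m, n⟩ hmn
      simp only [mem_filter, mem_product, mem_Icc] at hmn
      obtain ⟨⟨⟨hm1, hm2⟩, ⟨hn1, hn2⟩⟩, hcnd⟩ := hmn
      rw [hcond] at hcnd
      simp only [hT, mem_filter, mem_univ, true_and]
      refine ⟨hmem_ne n hn1 hn2, hcnd.1, ?_, ?_⟩
      · intro h
        apply hmem_ne m hm1 hm2
        have : (m : ZMod p) = 0 := by linear_combination h
        exact this
      · intro h
        apply hcnd.2
        linear_combination h
    · rintro ⟨u, b⟩ hub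
      simp only [hT, mem_filter, mem_univ, true_and] at hub
      obtain ⟨hb, hu, hube, hub2e⟩ := hub
      have ha' : u - b * e ≠ 0 := fun h => hube (by linear_combination h)
      simp only [mem_filter, mem_product, mem_Icc]
      have hv1 := hval _ ha'
      have hv2 := hval _ hb
      refine ⟨⟨⟨hv1.1, hv1.2⟩, ⟨hv2.1, hv2.2⟩⟩, ?_⟩
      rw [hcond]
      rw [hvalcast, hvalcast]
      constructor
      · intro h; apply hu; linear_combination h
      · intro h; apply hub2e; linear_combination h
    · rintro ⟨m, n⟩ hmn
      simp only [mem_filter, mem_product, mem_Icc] at hmn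
      obtain ⟨⟨⟨hm1, hm2⟩, ⟨hn1, hn2⟩⟩, hcnd⟩ := hmn
      have h1 : ((m : ZMod p) + (n : ZMod p) * e - (n : ZMod p) * e) = (m : ZMod p) := by ring
      simp only [h1]
      have hmv : ((m : ZMod p).val : ℤ) = m := by
        rw [ZMod.val_intCast]
        exact Int.emod_eq_of_lt (by omega) (by omega)
      have hnv : ((n : ZMod p).val : ℤ) = n := by
        rw [ZMod.val_intCast]
        exact Int.emod_eq_of_lt (by omega) (by omega)
      simp [hmv, hnv]
    · rintro ⟨u, b⟩ hub
      simp only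
      rw [hvalcast, hvalcast]
      simp
    · rintro ⟨m, n⟩ _
      rfl
  rw [stepA]
  -- Step B: fiberwise
  rw [← Finset.prod_fiberwise_of_maps_to (g := Prod.fst) (t := (univ : Finset (ZMod p)))
      (fun x _ => mem_univ x.1) (fun x => (X : (ZMod p)[X]) - C x.1)]
  -- Step C/D: compute inner products
  have hinner : ∀ u : ZMod p, ∏ x ∈ T.filter (fun x => x.1 = u), ((X : (ZMod p)[X]) - C x.1)
      = (X - C u) ^ (if u = 0 then 0 else p - 3) := by
    intro u
    have hconst : ∏ x ∈ T.filter (fun x => x.1 = u), ((X : (ZMod p)[X]) - C x.1)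
        = (X - C u) ^ (T.filter (fun x => x.1 = u)).card := by
      rw [← Finset.prod_const]
      exact Finset.prod_congr rfl (fun x hx => by
        rw [(Finset.mem_filter.mp hx).2])
    rw [hconst]
    congr 1
    by_cases hu : u = 0
    · subst hu
      rw [if_pos rfl, Finset.card_eq_zero]
      ext x
      simp only [hT, Finset.mem_filter, mem_univ, true_and, Finset.notMem_empty, iff_false]
      rintro ⟨⟨hb, hx1, _, _⟩, hx0⟩
      exact hx1 hx0
    · rw [if_neg hu]
      -- fiber card = p - 3
      have hbij : (T.filter (fun x => x.1 = u)).card =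
          (univ.filter (fun b : ZMod p => b ≠ 0 ∧ u ≠ b * e ∧ u ≠ 2 * (b * e))).card := by
        apply Finset.card_bij (fun x _ => x.2)
        · rintro ⟨u', b⟩ hx
          simp only [hT, Finset.mem_filter, mem_univ, true_and] at hx ⊢
          obtain ⟨⟨hb, hu', h1, h2'⟩, hfst⟩ := hx
          subst hfst
          exact ⟨hb, h1, h2'⟩
        · rintro ⟨u1, b1⟩ h1 ⟨u2, b2⟩ h2' hb
          simp only [hT, Finset.mem_filter] at h1 h2'
          simp only at hb
          ext <;> simp_all
        · intro b hb
          simp only [Finset.mem_filter, mem_univ, true_and] at hb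
          refine ⟨(u, b), ?_, rfl⟩
          simp only [hT, Finset.mem_filter, mem_univ, true_and]
          exact ⟨⟨hb.1, hu, hb.2.1, hb.2.2⟩, trivial⟩
      rw [hbij]
      have hiff1 : ∀ b : ZMod p, b = u / e ↔ u = b * e := by
        intro b; rw [eq_div_iff he0, eq_comm]
      have hiff2 : ∀ b : ZMod p, b = u / (2 * e) ↔ u = 2 * (b * e) := by
        intro b
        rw [eq_div_iff h2e]
        constructor <;> intro h <;> linear_combination -h
      have hset : univ.filter (fun b : ZMod p => b ≠ 0 ∧ u ≠ b * e ∧ u ≠ 2 * (b * e)) =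
          univ \ {0, u / e, u / (2 * e)} := by
        ext b
        simp only [Finset.mem_filter, mem_univ, true_and, Finset.mem_sdiff, Finset.mem_insert,
          Finset.mem_singleton, not_or]
        rw [hiff1 b, hiff2 b]
      rw [hset]
      rw [Finset.card_sdiff_of_subset (Finset.subset_univ _)]
      have hcard3 : ({0, u / e, u / (2 * e)} : Finset (ZMod p)).card = 3 := by
        rw [Finset.card_insert_of_notMem, Finset.card_insert_of_notMem, Finset.card_singleton]
        · simp only [Finset.mem_singleton]
          intro h
          have h' := (div_eq_div_iff he0 h2e).mp h
          have h'' : u * e = 0 := by linear_combination h'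
          exact (mul_ne_zero hu he0) h''
        · simp only [Finset.mem_insert, Finset.mem_singleton]
          push_neg
          exact ⟨(div_ne_zero hu he0).symm, (div_ne_zero hu h2e).symm⟩
      rw [hcard3, Finset.card_univ, ZMod.card]
  rw [Finset.prod_congr rfl (fun u _ => hinner u)]
  rw [← Finset.mul_prod_erase univ _ (mem_univ (0 : ZMod p))]
  rw [if_pos rfl, pow_zero, one_mul]
  rw [Finset.prod_congr rfl
    (fun u hu => by rw [if_neg (Finset.mem_erase.mp hu).1])]
  rw [Finset.prod_pow, aux_prod_units]

theorem stmt_1 (p : ℕ) [Fact p.Prime] (hodd : Odd p) (d : ℤ) (hd : ¬ (p : ℤ) ∣ d)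
    (hleg : legendreSym p d = 1) :
    (p : (Zsqrtd d)[X]) ∣
      (∏ mn ∈ (Finset.Icc (1 : ℤ) ((p : ℤ) - 1) ×ˢ Finset.Icc (1 : ℤ) ((p : ℤ) - 1)).filter
          (fun mn => ¬ (p : ℤ) ∣ (mn.1 ^ 2 - d * mn.2 ^ 2)),
        (X - C (⟨mn.1, mn.2⟩ : Zsqrtd d)))
      - ∑ k ∈ Finset.Icc 1 (p - 2),
          C ((k * (k + 1) / 2 : ℕ) : Zsqrtd d) * X ^ ((k - 1) * (p - 1)) := by
  have hp : p.Prime := Fact.out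
  obtain ⟨t, ht⟩ := id hodd
  have hp3 : 3 ≤ p := by have := hp.two_le; omega
  haveI : NeZero p := ⟨by omega⟩
  have hdz : (d : ZMod p) ≠ 0 := by
    rw [Ne, ZMod.intCast_zmod_eq_zero_iff_dvd]; exact hd
  obtain ⟨e, he⟩ := (legendreSym.eq_one_iff p hdz).mp hleg
  have he' : e * e = (d : ZMod p) := he.symm
  have he'' : (-e) * (-e) = (d : ZMod p) := by rw [neg_mul_neg]; exact he'
  have he0 : e ≠ 0 := by
    intro h; rw [h, mul_zero] at he'; exact hdz he'.symm
  have h2 : (2 : ZMod p) ≠ 0 := by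
    have : ((2 : ℕ) : ZMod p) ≠ 0 := by
      rw [Ne, ZMod.natCast_eq_zero_iff]
      intro h; have := Nat.le_of_dvd (by norm_num) h; omega
    simpa using this
  set Q : (Zsqrtd d)[X] :=
      (∏ mn ∈ (Finset.Icc (1 : ℤ) ((p : ℤ) - 1) ×ˢ Finset.Icc (1 : ℤ) ((p : ℤ) - 1)).filter
          (fun mn => ¬ (p : ℤ) ∣ (mn.1 ^ 2 - d * mn.2 ^ 2)),
        (X - C (⟨mn.1, mn.2⟩ : Zsqrtd d)))
      - ∑ k ∈ Finset.Icc 1 (p - 2),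
          C ((k * (k + 1) / 2 : ℕ) : Zsqrtd d) * X ^ ((k - 1) * (p - 1)) with hQ
  have hmap : ∀ (ε : ZMod p) (hε : ε * ε = (d : ZMod p)),
      Q.map (Zsqrtd.lift ⟨ε, hε⟩) = 0 := by
    intro ε hε
    rw [hQ, Polynomial.map_sub, Polynomial.map_prod, Polynomial.map_sum]
    have h1 : ∀ mn : ℤ × ℤ,
        (X - C (⟨mn.1, mn.2⟩ : Zsqrtd d)).map (Zsqrtd.lift ⟨ε, hε⟩)
          = X - C ((mn.1 : ZMod p) + (mn.2 : ZMod p) * ε) := by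
      intro mn
      rw [Polynomial.map_sub, Polynomial.map_X, Polynomial.map_C]
      simp [Zsqrtd.lift_apply_apply]
    have h2' : ∀ k : ℕ,
        (C ((k * (k + 1) / 2 : ℕ) : Zsqrtd d) * X ^ ((k - 1) * (p - 1))).map
            (Zsqrtd.lift ⟨ε, hε⟩)
          = C ((k * (k + 1) / 2 : ℕ) : ZMod p) * X ^ ((k - 1) * (p - 1)) := by
      intro k
      rw [Polynomial.map_mul, Polynomial.map_pow, Polynomial.map_X, Polynomial.map_C,
        map_natCast]
    rw [Finset.prod_congr rfl (fun mn _ => h1 mn), Finset.sum_congr rfl (fun k _ => h2' k)]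
    rw [aux_prod p hodd d hd ε hε, aux_sum p hodd, sub_self]
  have hmap1 := hmap e he'
  have hmap2 := hmap (-e) he''
  rw [← Polynomial.C_eq_natCast, Polynomial.C_dvd_iff_dvd_coeff]
  intro i
  set z := Q.coeff i with hz
  have hz1 : ((z.re : ZMod p) + (z.im : ZMod p) * e) = 0 := by
    have := congrArg (fun q => Polynomial.coeff q i) hmap1
    simpa [Polynomial.coeff_map, Zsqrtd.lift_apply_apply] using this
  have hz2 : ((z.re : ZMod p) + (z.im : ZMod p) * (-e)) = 0 := by
    have := congrArg (fun q => Polynomial.coeff q i) hmap2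
    simpa [Polynomial.coeff_map, Zsqrtd.lift_apply_apply] using this
  have hre : ((z.re : ZMod p)) = 0 := by
    have h' : (2 : ZMod p) * (z.re : ZMod p) = 0 := by linear_combination hz1 + hz2
    rcases mul_eq_zero.mp h' with h | h
    · exact absurd h h2
    · exact h
  have him : ((z.im : ZMod p)) = 0 := by
    have h' : (2 : ZMod p) * ((z.im : ZMod p) * e) = 0 := by linear_combination hz1 - hz2
    rcases mul_eq_zero.mp h' with h | h
    · exact absurd h h2
    · rcases mul_eq_zero.mp h with h'' | h''
      · exact h''
      · exact absurd h'' he0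
  have : ((p : ℤ) : Zsqrtd d) ∣ z := by
    rw [Zsqrtd.intCast_dvd]
    constructor
    · exact_mod_cast (ZMod.intCast_zmod_eq_zero_iff_dvd _ p).mp hre
    · exact_mod_cast (ZMod.intCast_zmod_eq_zero_iff_dvd _ p).mp him
  exact_mod_cast this
end

section
/- Let p be an odd prime and d an integer with p ∤ d. In the quotient ring ℤ[√d]/(p²), each element m + n√d with 1 ≤ m,n ≤ p−1 and p ∤ m²−dn² is invertible, and the sum of the inverses of all such elements is zero; equivalently, ∑_{1 ≤ m,n ≤ p−1, p ∤ m²−dn²} 1/(m + n√d) ≡ 0 (mod p²). -/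
open Finset

lemma map_ringInverse {R S : Type*} [CommRing R] [CommRing S] (φ : R →+* S) {a : R}
    (h : IsUnit a) : φ (Ring.inverse a) = Ring.inverse (φ a) := by
  obtain ⟨u, rfl⟩ := h
  rw [Ring.inverse_unit]
  have h1 : φ ↑u = ↑(Units.map (φ : R →* S) u) := rfl
  have h2 : φ ↑u⁻¹ = ↑(Units.map (φ : R →* S) u)⁻¹ := rfl
  rw [h1, h2, Ring.inverse_unit]

lemma inverse_add_inverse {R : Type*} [CommRing R] {a b : R} (ha : IsUnit a) (hb : IsUnit b) :
    Ring.inverse a + Ring.inverse b = Ring.inverse (a * b) * (a + b) := by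
  obtain ⟨u, rfl⟩ := ha
  obtain ⟨v, rfl⟩ := hb
  have : (↑u : R) * ↑v = ↑(u * v) := rfl
  rw [this, Ring.inverse_unit, Ring.inverse_unit, Ring.inverse_unit]
  have hu : (↑u⁻¹ : R) = ↑(u*v)⁻¹ * ↑v := by rw [mul_inv_rev]; push_cast; rw [mul_comm (↑v⁻¹:R) (↑u⁻¹:R), mul_assoc, Units.inv_mul, mul_one]
  have hv : (↑v⁻¹ : R) = ↑(u*v)⁻¹ * ↑u := by rw [mul_inv_rev]; push_cast; rw [mul_assoc, Units.inv_mul, mul_one]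
  rw [hu, hv]; ring

lemma isUnit_mk {d c : ℤ} {x : Zsqrtd d} (h : IsCoprime x.norm c) :
    IsUnit (Ideal.Quotient.mk (Ideal.span {(c : Zsqrtd d)}) x) := by
  obtain ⟨a, b, hab⟩ := h
  apply IsUnit.of_mul_eq_one (Ideal.Quotient.mk _ (star x * a))
  rw [← map_mul, ← map_one (Ideal.Quotient.mk (Ideal.span {(c : Zsqrtd d)})),
    Ideal.Quotient.mk_eq_mk_iff_sub_mem, Ideal.mem_span_singleton]
  refine ⟨(-b : ℤ), ?_⟩
  have hn : ((x.norm : ℤ) : Zsqrtd d) = x * star x := Zsqrtd.norm_eq_mul_conj x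
  have hcast : ((a * x.norm + b * c : ℤ) : Zsqrtd d) = 1 := by rw [hab]; norm_num
  push_cast at hcast ⊢
  rw [← hcast, hn]
  ring

lemma ringInverse_neg {R : Type*} [CommRing R] (a : R) :
    Ring.inverse (-a) = - Ring.inverse a := by
  by_cases h : IsUnit a
  · have hn : IsUnit (-a) := h.neg
    have h1 : Ring.inverse (-a) * (-a) = 1 := Ring.inverse_mul_cancel _ hn
    have h2 : a * Ring.inverse a = 1 := Ring.mul_inverse_cancel _ h
    calc Ring.inverse (-a) = Ring.inverse (-a) * (a * Ring.inverse a) := by rw [h2, mul_one]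
      _ = (Ring.inverse (-a) * (-a)) * (- Ring.inverse a) := by ring
      _ = - Ring.inverse a := by rw [h1, one_mul]
  · rw [Ring.inverse_non_unit _ h, Ring.inverse_non_unit, neg_zero]
    intro hn
    exact h (by simpa using hn.neg)


lemma zmod3_sq_eq_one : ∀ x : ZMod 3, x ≠ 0 → x ^ 2 = 1 := by decide
lemma zmod3_eq_two : ∀ x : ZMod 3, x ≠ 0 → x ≠ 1 → x = 2 := by decide
lemma zmod3_neg_ne : ∀ x : ZMod 3, x ≠ 0 → ¬ (-x = x) := by decide
lemma zmod3_six : (2 * (1 + 2 * 1) : ZMod 3) = 0 := by decide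

set_option maxHeartbeats 1000000 in
set_option synthInstance.maxHeartbeats 400000 in
theorem stmt_3 (p : ℕ) [Fact p.Prime] (hodd : Odd p) (d : ℤ) (hd : ¬ (p : ℤ) ∣ d) :
    (∀ m n : ℤ, m ∈ Finset.Icc (1 : ℤ) ((p : ℤ) - 1) → n ∈ Finset.Icc (1 : ℤ) ((p : ℤ) - 1) →
      ¬ (p : ℤ) ∣ (m ^ 2 - d * n ^ 2) →
      IsUnit (Ideal.Quotient.mk (Ideal.span {((p : Zsqrtd d)) ^ 2}) (⟨m, n⟩ : Zsqrtd d))) ∧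
    ∑ mn ∈ (Finset.Icc (1 : ℤ) ((p : ℤ) - 1) ×ˢ Finset.Icc (1 : ℤ) ((p : ℤ) - 1)).filter
        (fun mn => ¬ (p : ℤ) ∣ (mn.1 ^ 2 - d * mn.2 ^ 2)),
      Ring.inverse (Ideal.Quotient.mk (Ideal.span {((p : Zsqrtd d)) ^ 2}) (⟨mn.1, mn.2⟩ : Zsqrtd d))
      = 0 := by
  have hp : p.Prime := Fact.out
  haveI : NeZero p := ⟨hp.pos.ne'⟩
  have hpZ : Prime (p : ℤ) := Nat.prime_iff_prime_int.mp hp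
  have hp2 : p ≠ 2 := by rintro rfl; exact (by decide : ¬ Odd 2) hodd
  have hp3 : 3 ≤ p := by
    have := hp.two_le; omega
  have hgen : ((p : Zsqrtd d)) ^ 2 = (((p:ℤ)^2 : ℤ) : Zsqrtd d) := by push_cast; ring
  have hnorm : ∀ m n : ℤ, (⟨m, n⟩ : Zsqrtd d).norm = m ^ 2 - d * n ^ 2 := by
    intro m n; rw [Zsqrtd.norm_def]; ring
  have hunitI : ∀ x : Zsqrtd d, ¬ (p:ℤ) ∣ x.norm →
      IsUnit (Ideal.Quotient.mk (Ideal.span {((p : Zsqrtd d)) ^ 2}) x) := by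
    intro x hx
    rw [hgen]
    exact isUnit_mk ((hpZ.coprime_iff_not_dvd.mpr hx).symm.pow_right)
  have hunitJ : ∀ x : Zsqrtd d, ¬ (p:ℤ) ∣ x.norm →
      IsUnit (Ideal.Quotient.mk (Ideal.span {(((p:ℤ)) : Zsqrtd d)}) x) := by
    intro x hx
    exact isUnit_mk ((hpZ.coprime_iff_not_dvd.mpr hx).symm)
  refine ⟨fun m n hm hn hnd => hunitI _ (by rw [hnorm]; exact hnd), ?_⟩
  -- notation
  set I : Ideal (Zsqrtd d) := Ideal.span {((p : Zsqrtd d)) ^ 2} with hIdef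
  set J : Ideal (Zsqrtd d) := Ideal.span {(((p:ℤ)) : Zsqrtd d)} with hJdef
  set f := Ideal.Quotient.mk I with hfdef
  set g := Ideal.Quotient.mk J with hgdef
  have hIJ : I ≤ J := by
    rw [hIdef, hJdef, Ideal.span_singleton_le_span_singleton]
    exact ⟨((p:ℤ) : Zsqrtd d), by push_cast; ring⟩
  set φ := Ideal.Quotient.factor hIJ with hφdef
  set S := (Finset.Icc (1 : ℤ) ((p : ℤ) - 1) ×ˢ Finset.Icc (1 : ℤ) ((p : ℤ) - 1)).filter
      (fun mn => ¬ (p : ℤ) ∣ (mn.1 ^ 2 - d * mn.2 ^ 2)) with hSdef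
  have hmemS : ∀ s : ℤ × ℤ, s ∈ S ↔
      ((1 ≤ s.1 ∧ s.1 ≤ (p:ℤ) - 1) ∧ (1 ≤ s.2 ∧ s.2 ≤ (p:ℤ) - 1)) ∧
        ¬ (p : ℤ) ∣ (s.1 ^ 2 - d * s.2 ^ 2) := by
    intro s
    simp [hSdef, Finset.mem_filter, Finset.mem_product, Finset.mem_Icc]
  have hSnorm : ∀ s : ℤ × ℤ, s ∈ S → ¬ (p:ℤ) ∣ (⟨s.1, s.2⟩ : Zsqrtd d).norm := by
    intro s hs
    rw [hnorm]
    exact ((hmemS s).mp hs).2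
  -- the involution on S
  set ι : ℤ × ℤ → ℤ × ℤ := fun s => ((p:ℤ) - s.1, (p:ℤ) - s.2) with hιdef
  have hι_mem : ∀ s ∈ S, ι s ∈ S := by
    intro s hs
    rw [hmemS] at hs ⊢
    obtain ⟨⟨⟨h1, h2⟩, h3, h4⟩, h5⟩ := hs
    simp only [hιdef]
    refine ⟨⟨⟨by omega, by omega⟩, by omega, by omega⟩, ?_⟩
    intro hdvd
    apply h5
    have key : ((p:ℤ) - s.1) ^ 2 - d * ((p:ℤ) - s.2) ^ 2
        = (s.1 ^ 2 - d * s.2 ^ 2) + (p:ℤ) * ((p:ℤ) - 2*s.1 - d*(p:ℤ) + 2*d*s.2) := by ring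
    rw [key] at hdvd
    have := dvd_sub hdvd (dvd_mul_right (p:ℤ) ((p:ℤ) - 2*s.1 - d*(p:ℤ) + 2*d*s.2))
    simpa using this
  have hι_inv : ∀ s : ℤ × ℤ, ι (ι s) = s := by
    intro s
    simp only [hιdef]
    ext <;> simp <;> ring
  -- mod p reduction setup
  have hg_p : g (((p:ℤ)) : Zsqrtd d) = 0 := by
    rw [hgdef, Ideal.Quotient.eq_zero_iff_mem, hJdef]
    exact Ideal.subset_span rfl
  have hchar : CharP (Zsqrtd d ⧸ J) p := by
    constructor
    intro n
    have h1 : ((n : ℕ) : Zsqrtd d ⧸ J) = g ((n : ℤ) : Zsqrtd d) := by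
      push_cast
      simp [hgdef]
    rw [h1, hgdef, Ideal.Quotient.eq_zero_iff_mem, hJdef, Ideal.mem_span_singleton,
      Zsqrtd.intCast_dvd_intCast]
    exact_mod_cast Iff.rfl
  haveI := hchar
  set ψ := ZMod.castHom (dvd_refl p) (Zsqrtd d ⧸ J) with hψdef
  set s0 := g (⟨0, 1⟩ : Zsqrtd d) with hs0def
  set H : ZMod p × ZMod p → Zsqrtd d ⧸ J := fun ab => ψ ab.1 + ψ ab.2 * s0 with hHdef
  have hgH : ∀ m n : ℤ, g ⟨m, n⟩ = H ((m : ZMod p), (n : ZMod p)) := by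
    intro m n
    have hz : (⟨m, n⟩ : Zsqrtd d) = ((m:ℤ) : Zsqrtd d) + ((n:ℤ) : Zsqrtd d) * ⟨0, 1⟩ := by
      ext <;> simp [Zsqrtd.intCast_val]
    rw [hHdef]
    simp only [map_intCast]
    rw [hz, g.map_add, g.map_mul, map_intCast, map_intCast, hs0def]
  have hs0sq : s0 ^ 2 = ((d : ℤ) : Zsqrtd d ⧸ J) := by
    have hz : (⟨0, 1⟩ : Zsqrtd d) ^ 2 = ((d:ℤ) : Zsqrtd d) := by
      rw [pow_two]; ext <;> simp [Zsqrtd.intCast_val]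
    rw [hs0def, ← map_pow, hz, map_intCast]
  have hHunit : ∀ ab : ZMod p × ZMod p, ab.1 ^ 2 - (d : ZMod p) * ab.2 ^ 2 ≠ 0 →
      IsUnit (H ab) := by
    intro ab hab
    obtain ⟨m, hm⟩ := ZMod.intCast_surjective ab.1
    obtain ⟨n, hn⟩ := ZMod.intCast_surjective ab.2
    have hH : H ab = g ⟨m, n⟩ := by rw [hgH, hm, hn]
    rw [hH]
    apply hunitJ
    rw [hnorm]
    intro hdvd
    apply hab
    have : ((m ^ 2 - d * n ^ 2 : ℤ) : ZMod p) = 0 := by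
      rw [ZMod.intCast_zmod_eq_zero_iff_dvd]; exact hdvd
    push_cast at this
    rw [hm, hn] at this
    exact this
  -- reduce units mod p
  have hfunit : ∀ s ∈ S, IsUnit (f (⟨s.1, s.2⟩ : Zsqrtd d)) := fun s hs =>
    hunitI _ (hSnorm s hs)
  -- the key sum W' over ZMod p
  set S' : Finset (ZMod p × ZMod p) := Finset.univ.filter
      (fun ab => ab.1 ≠ 0 ∧ ab.2 ≠ 0 ∧ ab.1 ^ 2 - (d : ZMod p) * ab.2 ^ 2 ≠ 0) with hS'def
  have hmemS' : ∀ ab : ZMod p × ZMod p, ab ∈ S' ↔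
      ab.1 ≠ 0 ∧ ab.2 ≠ 0 ∧ ab.1 ^ 2 - (d : ZMod p) * ab.2 ^ 2 ≠ 0 := by
    intro ab; simp [hS'def]
  have hW' : ∑ ab ∈ S', (Ring.inverse (H ab)) ^ 2 = 0 := by
    rcases eq_or_ne p 3 with hp3' | hp3'
    · subst hp3'
      apply Finset.sum_involution (g := fun ab _ => (-ab.1, ab.2))
      · intro ab ha
        rw [hmemS'] at ha
        obtain ⟨h1, h2, h3⟩ := ha
        have ha2 : ab.1 ^ 2 = 1 := zmod3_sq_eq_one _ h1
        have hb2 : ab.2 ^ 2 = 1 := zmod3_sq_eq_one _ h2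
        have hd0 : (d : ZMod 3) ≠ 0 := fun h0 =>
          hd ((ZMod.intCast_zmod_eq_zero_iff_dvd d 3).mp h0)
        have hd1 : (d : ZMod 3) ≠ 1 := by
          intro h0
          exact h3 (by rw [ha2, hb2, h0]; ring)
        have hd3 : (d : ZMod 3) = 2 := zmod3_eq_two _ hd0 hd1
        have hdq : ψ ((d : ZMod 3)) = s0 ^ 2 := by rw [map_intCast, hs0sq]
        have hexp : ψ (2 * (ab.1 ^ 2 + (d : ZMod 3) * ab.2 ^ 2))
            = 2 * (ψ ab.1 ^ 2 + s0 ^ 2 * ψ ab.2 ^ 2) := by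
          rw [map_mul, map_add, map_mul, map_pow, map_pow, hdq, map_ofNat]
        have hH1 : H (-ab.1, ab.2) = - ψ ab.1 + ψ ab.2 * s0 := by
          simp only [hHdef]; rw [map_neg]
        have hH2 : H ab = ψ ab.1 + ψ ab.2 * s0 := rfl
        have hkey : (H (-ab.1, ab.2)) ^ 2 + (H ab) ^ 2 = 0 := by
          rw [hH1, hH2]
          have hrg : (- ψ ab.1 + ψ ab.2 * s0) ^ 2 + (ψ ab.1 + ψ ab.2 * s0) ^ 2
              = 2 * (ψ ab.1 ^ 2 + s0 ^ 2 * ψ ab.2 ^ 2) := by ring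
          rw [hrg, ← hexp, ha2, hb2, hd3]
          rw [zmod3_six, map_zero]
        have hsq : (H (-ab.1, ab.2)) ^ 2 = - (H ab) ^ 2 :=
          eq_neg_of_add_eq_zero_left hkey
        rw [Ring.inverse_pow, Ring.inverse_pow, hsq, ringInverse_neg]
        ring
      · intro ab ha _
        have h1 := ((hmemS' ab).mp ha).1
        intro heq
        have hfst : -ab.1 = ab.1 := congrArg Prod.fst heq
        exact zmod3_neg_ne _ h1 hfst
      · intro ab ha
        simp
      · intro ab ha
        rw [hmemS'] at ha ⊢
        obtain ⟨h1, h2, h3⟩ := ha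
        refine ⟨neg_ne_zero.mpr h1, h2, ?_⟩
        rw [neg_sq]
        exact h3
    · -- p ≠ 3
      set c : ZMod p := 2 with hcdef
      have hc0 : c ≠ 0 := by
        rw [hcdef]
        intro h0
        have h0' : ((2 : ℕ) : ZMod p) = 0 := by exact_mod_cast h0
        rw [ZMod.natCast_eq_zero_iff] at h0'
        exact hp2 ((Nat.prime_dvd_prime_iff_eq hp Nat.prime_two).mp h0')
      have hc3 : c ^ 2 - 1 ≠ 0 := by
        have he : c ^ 2 - 1 = ((3 : ℕ) : ZMod p) := by rw [hcdef]; push_cast; ring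
        rw [he]
        intro h0
        rw [ZMod.natCast_eq_zero_iff] at h0
        exact hp3' ((Nat.prime_dvd_prime_iff_eq hp (by norm_num)).mp h0)
      have hcu : IsUnit c := isUnit_iff_ne_zero.mpr hc0
      have hci : c⁻¹ ≠ 0 := inv_ne_zero hc0
      have hHsc : ∀ ab : ZMod p × ZMod p, H (c * ab.1, c * ab.2) = ψ c * H ab := by
        intro ab; simp only [hHdef]; rw [map_mul, map_mul]; ring
      have hresc : ∑ ab ∈ S', (Ring.inverse (H ab)) ^ 2
          = ∑ ab ∈ S', (Ring.inverse (H (c * ab.1, c * ab.2))) ^ 2 := by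
        apply Finset.sum_nbij' (i := fun ab : ZMod p × ZMod p => (c⁻¹ * ab.1, c⁻¹ * ab.2))
          (j := fun ab : ZMod p × ZMod p => (c * ab.1, c * ab.2))
        · intro ab hab
          rw [hmemS'] at hab ⊢
          obtain ⟨h1, h2, h3⟩ := hab
          refine ⟨mul_ne_zero hci h1, mul_ne_zero hci h2, ?_⟩
          have he : (c⁻¹ * ab.1) ^ 2 - (d : ZMod p) * (c⁻¹ * ab.2) ^ 2
              = (c⁻¹) ^ 2 * (ab.1 ^ 2 - (d : ZMod p) * ab.2 ^ 2) := by ring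
          rw [he]
          exact mul_ne_zero (pow_ne_zero _ hci) h3
        · intro ab hab
          rw [hmemS'] at hab ⊢
          obtain ⟨h1, h2, h3⟩ := hab
          refine ⟨mul_ne_zero hc0 h1, mul_ne_zero hc0 h2, ?_⟩
          have he : (c * ab.1) ^ 2 - (d : ZMod p) * (c * ab.2) ^ 2
              = c ^ 2 * (ab.1 ^ 2 - (d : ZMod p) * ab.2 ^ 2) := by ring
          rw [he]
          exact mul_ne_zero (pow_ne_zero _ hc0) h3
        · intro ab _
          ext
          · exact mul_inv_cancel_left₀ hc0 ab.1
          · exact mul_inv_cancel_left₀ hc0 ab.2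
        · intro ab _
          ext
          · exact inv_mul_cancel_left₀ hc0 ab.1
          · exact inv_mul_cancel_left₀ hc0 ab.2
        · intro ab _
          simp [mul_inv_cancel_left₀ hc0]
      have hψcu : IsUnit (ψ c) := hcu.map ψ
      have hstep : ∀ ab ∈ S', (Ring.inverse (H (c * ab.1, c * ab.2))) ^ 2
          = (Ring.inverse (ψ c)) ^ 2 * (Ring.inverse (H ab)) ^ 2 := by
        intro ab hab
        rw [hHsc, Ring.mul_inverse_rev]
        ring
      rw [Finset.sum_congr rfl hstep, ← Finset.mul_sum] at hresc
      have h2' : ψ c ^ 2 * (∑ ab ∈ S', (Ring.inverse (H ab)) ^ 2)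
          = ∑ ab ∈ S', (Ring.inverse (H ab)) ^ 2 := by
        nth_rewrite 1 [hresc]
        rw [← mul_assoc, ← mul_pow, Ring.mul_inverse_cancel _ hψcu, one_pow, one_mul]
      have hkey : ψ (c ^ 2 - 1) * (∑ ab ∈ S', (Ring.inverse (H ab)) ^ 2) = 0 := by
        rw [map_sub, map_pow, map_one, sub_mul, one_mul, h2', sub_self]
      have hu : IsUnit (ψ (c ^ 2 - 1)) := (isUnit_iff_ne_zero.mpr hc3).map ψ
      exact (hu.mul_right_eq_zero).mp hkey
  -- W = W'
  have hW : ∑ s ∈ S, (Ring.inverse (g (⟨s.1, s.2⟩ : Zsqrtd d))) ^ 2 = 0 := by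
    rw [← hW']
    apply Finset.sum_nbij' (i := fun s : ℤ × ℤ => ((s.1 : ZMod p), (s.2 : ZMod p)))
      (j := fun ab : ZMod p × ZMod p => ((ab.1.val : ℤ), (ab.2.val : ℤ)))
    · intro s hs
      rw [hmemS] at hs
      obtain ⟨⟨⟨h1, h2⟩, h3, h4⟩, h5⟩ := hs
      rw [hmemS']
      refine ⟨?_, ?_, ?_⟩
      · intro h0
        rw [ZMod.intCast_zmod_eq_zero_iff_dvd] at h0
        have := Int.le_of_dvd (by omega) h0
        omega
      · intro h0
        rw [ZMod.intCast_zmod_eq_zero_iff_dvd] at h0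
        have := Int.le_of_dvd (by omega) h0
        omega
      · intro h0
        apply h5
        rw [← ZMod.intCast_zmod_eq_zero_iff_dvd]
        push_cast
        exact h0
    · intro ab hab
      rw [hmemS'] at hab
      obtain ⟨h1, h2, h3⟩ := hab
      have hv1 : ab.1.val ≠ 0 := fun h => h1 ((ZMod.val_eq_zero ab.1).mp h)
      have hv2 : ab.2.val ≠ 0 := fun h => h2 ((ZMod.val_eq_zero ab.2).mp h)
      have hl1 : ab.1.val < p := ZMod.val_lt ab.1
      have hl2 : ab.2.val < p := ZMod.val_lt ab.2
      rw [hmemS]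
      have hc1 : ((ab.1.val : ℤ) : ZMod p) = ab.1 := by
        push_cast; rw [ZMod.natCast_val, ZMod.cast_id]
      have hc2 : ((ab.2.val : ℤ) : ZMod p) = ab.2 := by
        push_cast; rw [ZMod.natCast_val, ZMod.cast_id]
      refine ⟨⟨⟨by omega, by omega⟩, by omega, by omega⟩, ?_⟩
      intro hdvd
      apply h3
      rw [← ZMod.intCast_zmod_eq_zero_iff_dvd] at hdvd
      push_cast at hdvd
      rw [ZMod.natCast_val, ZMod.natCast_val, ZMod.cast_id, ZMod.cast_id] at hdvd
      exact hdvd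
    · intro s hs
      rw [hmemS] at hs
      obtain ⟨⟨⟨h1, h2⟩, h3, h4⟩, h5⟩ := hs
      have e1 : ((s.1 : ZMod p).val : ℤ) = s.1 := by
        rw [ZMod.val_intCast]; exact Int.emod_eq_of_lt (by omega) (by omega)
      have e2 : ((s.2 : ZMod p).val : ℤ) = s.2 := by
        rw [ZMod.val_intCast]; exact Int.emod_eq_of_lt (by omega) (by omega)
      ext
      · exact e1
      · exact e2
    · intro ab hab
      have hc1 : ((ab.1.val : ℤ) : ZMod p) = ab.1 := by
        push_cast; rw [ZMod.natCast_val, ZMod.cast_id]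
      have hc2 : ((ab.2.val : ℤ) : ZMod p) = ab.2 := by
        push_cast; rw [ZMod.natCast_val, ZMod.cast_id]
      ext
      · exact hc1
      · exact hc2
    · intro s hs
      rw [hgH]
  -- T and its factorization
  set T := ∑ s ∈ S, Ring.inverse (f (⟨s.1, s.2⟩ : Zsqrtd d) *
      f (⟨(ι s).1, (ι s).2⟩ : Zsqrtd d)) with hTdef
  have hφf : ∀ x : Zsqrtd d, φ (f x) = g x := fun x => Ideal.Quotient.factor_mk hIJ x
  have hgneg : ∀ s : ℤ × ℤ, g (⟨(ι s).1, (ι s).2⟩ : Zsqrtd d) = - g (⟨s.1, s.2⟩ : Zsqrtd d) := by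
    intro s
    rw [← map_neg, hgdef, Ideal.Quotient.mk_eq_mk_iff_sub_mem, hJdef, Ideal.mem_span_singleton,
      Zsqrtd.intCast_dvd]
    constructor <;> simp [hιdef]
  have hφT : φ T = 0 := by
    rw [hTdef, map_sum φ]
    have : ∀ s ∈ S, φ (Ring.inverse (f (⟨s.1, s.2⟩ : Zsqrtd d) *
        f (⟨(ι s).1, (ι s).2⟩ : Zsqrtd d)))
        = - (Ring.inverse (g (⟨s.1, s.2⟩ : Zsqrtd d))) ^ 2 := by
      intro s hs
      rw [map_ringInverse _ ((hfunit s hs).mul (hfunit _ (hι_mem s hs))),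
        map_mul, hφf, hφf, hgneg s]
      rw [mul_neg, ← pow_two, ringInverse_neg, Ring.inverse_pow]
    rw [Finset.sum_congr rfl this, Finset.sum_neg_distrib, hW, neg_zero]
    -- pairing identity
  have hpair : ∀ s ∈ S,
      Ring.inverse (f (⟨s.1, s.2⟩ : Zsqrtd d)) + Ring.inverse (f (⟨(ι s).1, (ι s).2⟩ : Zsqrtd d))
      = f (((p:ℤ) : Zsqrtd d) * ⟨1, 1⟩) *
        Ring.inverse (f (⟨s.1, s.2⟩ : Zsqrtd d) * f (⟨(ι s).1, (ι s).2⟩ : Zsqrtd d)) := by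
    intro s hs
    rw [inverse_add_inverse (hfunit s hs) (hfunit _ (hι_mem s hs))]
    have hadd : (⟨s.1, s.2⟩ : Zsqrtd d) + ⟨(ι s).1, (ι s).2⟩ = ((p:ℤ) : Zsqrtd d) * ⟨1, 1⟩ := by
      rw [Zsqrtd.smul_val]
      simp only [hιdef]
      ext <;> simp
    rw [← f.map_add, hadd]
    ring
  have hflip : ∑ s ∈ S, Ring.inverse (f (⟨(ι s).1, (ι s).2⟩ : Zsqrtd d))
      = ∑ s ∈ S, Ring.inverse (f (⟨s.1, s.2⟩ : Zsqrtd d)) :=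
    Finset.sum_nbij' ι ι hι_mem hι_mem (fun s _ => hι_inv s) (fun s _ => hι_inv s)
      (fun s _ => rfl)
  have h2sum : (2 : Zsqrtd d ⧸ I) * (∑ mn ∈ S, Ring.inverse (f (⟨mn.1, mn.2⟩ : Zsqrtd d)))
      = f (((p:ℤ) : Zsqrtd d) * ⟨1, 1⟩) * T := by
    rw [two_mul]
    nth_rewrite 2 [← hflip]
    rw [← Finset.sum_add_distrib, hTdef, Finset.mul_sum]
    exact Finset.sum_congr rfl hpair
  obtain ⟨t, ht⟩ := Ideal.Quotient.mk_surjective (I := I) T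
  have ht' : f t = T := ht
  have hgt : g t = 0 := by rw [← hφf t, ht']; exact hφT
  have hgt' : t ∈ J := (Ideal.Quotient.eq_zero_iff_mem).mp hgt
  obtain ⟨u, hu⟩ := Ideal.mem_span_singleton.mp
    (show t ∈ Ideal.span {(((p:ℤ)) : Zsqrtd d)} from hgt')
  have hz : f (((p:ℤ) : Zsqrtd d) * ⟨1, 1⟩) * T = 0 := by
    rw [← ht', ← map_mul f, hu]
    show Ideal.Quotient.mk I (((p:ℤ) : Zsqrtd d) * ⟨1, 1⟩ * (((p:ℤ) : Zsqrtd d) * u)) = 0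
    rw [Ideal.Quotient.eq_zero_iff_mem]
    show _ ∈ Ideal.span {((p : Zsqrtd d)) ^ 2}
    rw [Ideal.mem_span_singleton]
    exact ⟨⟨1, 1⟩ * u, by push_cast; ring⟩
  have h2unit : IsUnit (2 : Zsqrtd d ⧸ I) := by
    have e2 : f (((2:ℤ) : Zsqrtd d)) = (2 : Zsqrtd d ⧸ I) := by
      rw [map_intCast]; norm_cast
    rw [← e2]
    apply hunitI
    rw [Zsqrtd.intCast_val, hnorm]
    intro h4
    have h4' : (p:ℤ) ∣ 2 * 2 := by convert h4 using 1; ring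
    have h5 : (p:ℤ) ∣ 2 := by
      rcases (hpZ.dvd_mul).mp h4' with h | h <;> exact h
    have := Int.le_of_dvd (by norm_num) h5
    omega
  have hfinal : (2 : Zsqrtd d ⧸ I) *
      (∑ mn ∈ S, Ring.inverse (f (⟨mn.1, mn.2⟩ : Zsqrtd d))) = 0 := h2sum.trans hz
  exact (h2unit.mul_right_eq_zero).mp hfinal
end

section
/- Let p be an odd prime and d an integer with p ∤ d such that the Legendre symbol (d/p) equals 1. Then in ℤ[√d][X] one has ∏_{m=1}^{p−1} ∏_{n=1}^{p−1} (x − (m + n√d)) ≡ x^{p−1}·(x^{p−1} − 1)^{p−2} (mod p). -/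
open Polynomial Finset

/-!
Pick `r ∈ 𝔽_p` with `r² = d`. Since `p` is odd, the two ring maps `ℤ[√d] → 𝔽_p` sending `√d` to
`±r` jointly detect divisibility by `p`, and both send the product to
`∏_{z, w ∈ 𝔽_p^×} (X - (z + w r))`. For fixed `w` the inner product is `(X^p - X) / (X - w r)`, and
`w r` runs over `𝔽_p^×`, so the whole product is `(X^p - X)^(p-1) / (X^(p-1) - 1)`.
-/

namespace FiniteField

variable {K : Type*} [Field K] [Fintype K]

local notation "q" => Fintype.card K

theorem prod_univ_X_sub_C : ∏ a : K, (X - C a) = X ^ q - X := by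
  have hmonic : (X ^ q - X : K[X]).Monic :=
    monic_X_pow_sub (by rw [degree_X]; exact_mod_cast Fintype.one_lt_card)
  have hcard : Multiset.card (X ^ q - X : K[X]).roots = (X ^ q - X : K[X]).natDegree := by
    rw [roots_X_pow_card_sub_X, X_pow_card_sub_X_natDegree_eq _ Fintype.one_lt_card]
    rfl
  rw [← prod_multiset_X_sub_C_of_monic_of_roots_card_eq hmonic hcard, roots_X_pow_card_sub_X,
    prod_eq_multiset_prod]

variable [DecidableEq K]

theorem prod_erase_zero_X_sub_C : ∏ a ∈ univ.erase (0 : K), (X - C a) = X ^ (q - 1) - 1 := by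
  apply mul_left_cancel₀ (X_ne_zero (R := K))
  have h := mul_prod_erase univ (fun a : K => X - C a) (mem_univ 0)
  rw [map_zero, sub_zero] at h
  rw [h, prod_univ_X_sub_C, mul_sub, mul_one, ← pow_succ', Nat.sub_add_cancel Fintype.card_pos]

theorem X_sub_C_mul_prod_erase_zero_X_sub_C_add (c : K) :
    (X - C c) * ∏ a ∈ univ.erase 0, (X - C (a + c)) = X ^ q - X := by
  have h := mul_prod_erase univ (fun a : K => X - C (a + c)) (mem_univ 0)
  rw [zero_add] at h
  rw [h, ← prod_univ_X_sub_C]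
  exact Fintype.prod_equiv (Equiv.addRight c) _ _ fun _ => rfl

theorem prod_erase_zero_X_sub_C_mul {b : K} (hb : b ≠ 0) :
    ∏ a ∈ univ.erase 0, (X - C (a * b)) = X ^ (q - 1) - 1 := by
  rw [← prod_erase_zero_X_sub_C]
  refine prod_nbij' (· * b) (· / b) ?_ ?_ ?_ ?_ fun _ _ => rfl <;>
    simp_all [mem_erase]

theorem prod_prod_erase_zero_X_sub_C_add_mul {b : K} (hb : b ≠ 0) :
    ∏ a ∈ univ.erase 0, ∏ c ∈ univ.erase 0, (X - C (a + c * b))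
      = X ^ (q - 1) * (X ^ (q - 1) - 1) ^ (q - 2) := by
  have hq : 1 < q := Fintype.one_lt_card
  have hV : (X ^ (q - 1) - 1 : K[X]) ≠ 0 := by
    rw [← prod_erase_zero_X_sub_C]
    exact prod_ne_zero_iff.mpr fun a _ => X_sub_C_ne_zero a
  have hcard : #(univ.erase (0 : K)) = q - 1 := by simp [card_erase_of_mem]
  apply mul_right_cancel₀ hV
  calc _ = ∏ c ∈ univ.erase 0, ((X - C (c * b)) * ∏ a ∈ univ.erase 0, (X - C (a + c * b))) := by
        rw [prod_mul_distrib, prod_erase_zero_X_sub_C_mul hb, prod_comm, mul_comm]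
    _ = (X ^ q - X) ^ (q - 1) := by
        simp only [X_sub_C_mul_prod_erase_zero_X_sub_C_add, prod_const, hcard]
    _ = _ := by
        rw [mul_assoc, ← pow_succ, show q - 2 + 1 = q - 1 by omega, ← mul_pow]
        congr 1
        rw [mul_sub, mul_one, ← pow_succ', Nat.sub_add_cancel hq.le]

end FiniteField

theorem ZMod.prod_Icc_intCast_eq_prod_erase_zero {n : ℕ} [NeZero n] {M : Type*} [CommMonoid M]
    (f : ZMod n → M) :
    ∏ m ∈ Icc (1 : ℤ) (n - 1), f m = ∏ z ∈ univ.erase 0, f z := by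
  have hval (m : ℤ) (hm : m ∈ Icc (1 : ℤ) (n - 1)) : ((m : ZMod n).val : ℤ) = m := by
    rw [mem_Icc] at hm
    rw [ZMod.val_intCast]
    exact Int.emod_eq_of_lt (by omega) (by omega)
  refine prod_nbij' (fun m => (m : ZMod n)) (fun z => (z.val : ℤ)) ?_ ?_ hval ?_ fun _ _ => rfl
  · intro m hm
    have := hval m hm
    rw [mem_Icc] at hm
    simp only [mem_erase, mem_univ, and_true, ne_eq, ← ZMod.val_eq_zero]
    omega
  · intro z hz
    simp only [mem_erase, mem_univ, and_true, ne_eq, ← ZMod.val_eq_zero] at hz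
    have := ZMod.val_lt z
    simp only [mem_Icc]
    omega
  · intro z _
    simp

namespace Zsqrtd

variable {d : ℤ} {p : ℕ} [Fact p.Prime]

theorem natCast_dvd_of_lift_eq_zero (hp : p ≠ 2) {r : ZMod p} (hr : r * r = d) (hr0 : r ≠ 0)
    {c : ℤ√d} (h₁ : lift ⟨r, hr⟩ c = 0) (h₂ : lift ⟨-r, (neg_mul_neg r r).trans hr⟩ c = 0) :
    (p : ℤ√d) ∣ c := by
  simp only [lift_apply_apply] at h₁ h₂
  have him : (c.im : ZMod p) = 0 := by
    have : 2 * r * c.im = 0 := by linear_combination h₁ - h₂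
    simpa [Ring.two_ne_zero (by rwa [ZMod.ringChar_zmod_n]), hr0] using this
  have hre : (c.re : ZMod p) = 0 := by
    simpa [him] using h₁
  rw [← Int.cast_natCast, intCast_dvd, ← ZMod.intCast_zmod_eq_zero_iff_dvd,
    ← ZMod.intCast_zmod_eq_zero_iff_dvd]
  exact ⟨hre, him⟩

theorem natCast_dvd_of_map_lift_eq_zero (hp : p ≠ 2) {r : ZMod p} (hr : r * r = d) (hr0 : r ≠ 0)
    {g : (ℤ√d)[X]} (h₁ : g.map (lift ⟨r, hr⟩) = 0)
    (h₂ : g.map (lift ⟨-r, (neg_mul_neg r r).trans hr⟩) = 0) :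
    (p : (ℤ√d)[X]) ∣ g := by
  rw [← C_eq_natCast, C_dvd_iff_dvd_coeff]
  intro i
  exact natCast_dvd_of_lift_eq_zero hp hr hr0 (by rw [← coeff_map, h₁, coeff_zero])
    (by rw [← coeff_map, h₂, coeff_zero])

theorem map_lift_prod_Icc_prod_Icc_X_sub_C {r : ZMod p} (hr : r * r = d) (hr0 : r ≠ 0) :
    (∏ m ∈ Icc (1 : ℤ) (p - 1), ∏ n ∈ Icc (1 : ℤ) (p - 1), (X - C (⟨m, n⟩ : ℤ√d))).map
        (lift ⟨r, hr⟩)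
      = X ^ (p - 1) * (X ^ (p - 1) - 1) ^ (p - 2) := by
  simp only [Polynomial.map_prod, Polynomial.map_sub, map_X, map_C, lift_apply_apply]
  have key := FiniteField.prod_prod_erase_zero_X_sub_C_add_mul hr0
  rw [ZMod.card] at key
  rw [ZMod.prod_Icc_intCast_eq_prod_erase_zero
    (fun a => ∏ n ∈ Icc (1 : ℤ) (p - 1), (X - C (a + (n : ZMod p) * r))), ← key]
  exact prod_congr rfl fun a _ =>
    ZMod.prod_Icc_intCast_eq_prod_erase_zero fun b => X - C (a + b * r)

end Zsqrtd

theorem stmt_4_general (p : ℕ) [Fact p.Prime] (hodd : Odd p) (d : ℤ)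
    (hleg : legendreSym p d = 1) :
    (p : (Zsqrtd d)[X]) ∣
      (∏ m ∈ Finset.Icc (1 : ℤ) ((p : ℤ) - 1), ∏ n ∈ Finset.Icc (1 : ℤ) ((p : ℤ) - 1),
        (X - C (⟨m, n⟩ : Zsqrtd d)))
      - X ^ (p - 1) * (X ^ (p - 1) - 1) ^ (p - 2) := by
  have hd0 : (d : ZMod p) ≠ 0 := fun h => by simp [(legendreSym.eq_zero_iff p d).mpr h] at hleg
  obtain ⟨r, hr⟩ := (legendreSym.eq_one_iff p hd0).mp hleg
  have hr0 : r ≠ 0 := by rintro rfl; simp [hr] at hd0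
  have hp : p ≠ 2 := by rintro rfl; norm_num at hodd
  apply Zsqrtd.natCast_dvd_of_map_lift_eq_zero hp hr.symm hr0
  · rw [Polynomial.map_sub, Zsqrtd.map_lift_prod_Icc_prod_Icc_X_sub_C hr.symm hr0]
    simp
  · rw [Polynomial.map_sub, Zsqrtd.map_lift_prod_Icc_prod_Icc_X_sub_C _ (neg_ne_zero.mpr hr0)]
    simp

theorem stmt_4 (p : ℕ) [Fact p.Prime] (hodd : Odd p) (d : ℤ) (hd : ¬ (p : ℤ) ∣ d)
    (hleg : legendreSym p d = 1) :
    (p : (Zsqrtd d)[X]) ∣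
      (∏ m ∈ Finset.Icc (1 : ℤ) ((p : ℤ) - 1), ∏ n ∈ Finset.Icc (1 : ℤ) ((p : ℤ) - 1),
        (X - C (⟨m, n⟩ : Zsqrtd d)))
      - X ^ (p - 1) * (X ^ (p - 1) - 1) ^ (p - 2) :=
  stmt_4_general p hodd d hleg
end

section
/- Let p be an odd prime and d an integer with p ∤ d such that the Legendre symbol (d/p) equals 1. Then in ℤ[√d][X] one has ∏_{1 ≤ m,n ≤ p−1, p ∣ m²−dn²} (x − (m + n√d)) ≡ x^{p−1}·(x^{p−1} − 1) (mod p), where the product runs over all pairs (m,n) with 1 ≤ m,n ≤ p−1 and p dividing m² − dn². -/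
/-!
Pick `c` with `c² ≡ d (mod p)`. The two ring maps `ℤ[√d] → 𝔽_p` sending `√d` to `±c` detect
divisibility by `p`, because `2c` is invertible; so it suffices to compute the image of the
product under `√d ↦ e` for `e = ±c`. There `p ∣ m² - dn²` means `m ≡ ±ne`, so the roots
`m + ne` are `2ne`, which runs once through `𝔽_pˣ` as `n` does, and `0`, taken `p - 1` times.
-/

open Polynomial Finset

section FiniteField

variable {K : Type*} [Field K] [Fintype K] [DecidableEq K]

theorem prod_units_X_sub_C : ∏ u : Kˣ, (X - C (u : K)) = X ^ (Fintype.card K - 1) - 1 := by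
  classical
  have := Lagrange.nodal_subgroup_eq_X_pow_card_sub_one (⊤ : Subgroup Kˣ)
  simpa [Lagrange.nodal, Fintype.card_units] using this

theorem prod_ite_sq_eq_sq {M : Type*} [CommMonoid M] (h2 : (2 : K) ≠ 0) (x : Kˣ) (f : Kˣ → M) :
    ∏ a : Kˣ, (if (a : K) ^ 2 = (x : K) ^ 2 then f a else 1) = f x * f (-x) := by
  have hx : x ≠ -x := fun h => by
    have : (2 : K) * x = 0 := by rw [two_mul]; nth_rw 1 [h]; simp
    simp [h2] at this
  have hroots : ({a | (a : K) ^ 2 = (x : K) ^ 2} : Finset Kˣ) = {x, -x} := by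
    ext a
    simp [sq_eq_sq_iff_eq_or_eq_neg, Units.ext_iff]
  rw [← prod_filter, hroots, prod_pair hx]

theorem prod_prod_ite_sq_eq_X_sub_C (h2 : (2 : K) ≠ 0) (e : Kˣ) :
    ∏ b : Kˣ, ∏ a : Kˣ,
      (if (a : K) ^ 2 = ((b : K) * e) ^ 2 then X - C ((a : K) + b * e) else 1)
      = X ^ (Fintype.card K - 1) * (X ^ (Fintype.card K - 1) - 1) := by
  let two : Kˣ := Units.mk0 2 h2
  calc _ = ∏ b : Kˣ, X * (X - C ((b * (two * e) : Kˣ) : K)) := by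
        refine Fintype.prod_congr _ _ fun b => ?_
        simp_rw [← Units.val_mul]
        rw [prod_ite_sq_eq_sq h2, Units.val_neg, neg_add_cancel, C_0, sub_zero, mul_comm]
        congr 3
        simp only [two, Units.val_mul, Units.val_mk0]
        ring
    _ = _ := by
        rw [prod_mul_distrib, prod_const, card_univ, Fintype.card_units,
          Fintype.prod_equiv (Equiv.mulRight (two * e)) (fun b => X - C ((b * (two * e) : Kˣ) : K))
            (fun u => X - C (u : K)) fun _ => rfl,
          prod_units_X_sub_C]

end FiniteField

namespace Zsqrtd

variable {d : ℤ} {n : ℕ} {c : ZMod n}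

theorem natCast_dvd_of_lift_eq_zero_s6 (hc : c * c = d) (h2c : IsUnit (2 * c)) {z : ℤ√d}
    (h₁ : lift ⟨c, hc⟩ z = 0) (h₂ : lift ⟨-c, by rwa [neg_mul_neg]⟩ z = 0) :
    (n : ℤ√d) ∣ z := by
  simp only [lift_apply_apply] at h₁ h₂
  have hre : (z.re : ZMod n) * 2 = 0 := by linear_combination h₁ + h₂
  have him : (z.im : ZMod n) * (2 * c) = 0 := by linear_combination h₁ - h₂
  rw [(isUnit_of_mul_isUnit_left h2c).mul_left_eq_zero, ZMod.intCast_zmod_eq_zero_iff_dvd] at hre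
  rw [h2c.mul_left_eq_zero, ZMod.intCast_zmod_eq_zero_iff_dvd] at him
  exact_mod_cast (intCast_dvd _ _).mpr ⟨hre, him⟩

theorem natCast_dvd_of_map_lift_eq_zero_s6 (hc : c * c = d) (h2c : IsUnit (2 * c)) {P : (ℤ√d)[X]}
    (h₁ : P.map (lift ⟨c, hc⟩) = 0) (h₂ : P.map (lift ⟨-c, by rwa [neg_mul_neg]⟩) = 0) :
    (n : (ℤ√d)[X]) ∣ P := by
  rw [← C_eq_natCast, C_dvd_iff_dvd_coeff]
  intro i
  apply natCast_dvd_of_lift_eq_zero_s6 hc h2c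
  · rw [← coeff_map, h₁, coeff_zero]
  · rw [← coeff_map, h₂, coeff_zero]

end Zsqrtd

namespace ZMod

theorem prod_Icc_intCast_eq_prod_units (p : ℕ) [Fact p.Prime] {M : Type*} [CommMonoid M]
    (f : ZMod p → M) : ∏ m ∈ Icc (1 : ℤ) (p - 1), f m = ∏ u : (ZMod p)ˣ, f u := by
  have hcast_ne_zero {m : ℤ} (hm : m ∈ Icc (1 : ℤ) (p - 1)) : (m : ZMod p) ≠ 0 := by
    rw [mem_Icc] at hm
    rw [Ne, intCast_zmod_eq_zero_iff_dvd]
    intro h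
    have := Int.le_of_dvd (by omega) h
    omega
  refine prod_bij' (fun m hm => Units.mk0 (m : ZMod p) (hcast_ne_zero hm))
    (fun u _ => ((u : ZMod p).val : ℤ)) (fun _ _ => mem_univ _) (fun u _ => ?_) (fun m hm => ?_)
    (fun u _ => ?_) (fun _ _ => rfl)
  · have : (u : ZMod p).val ≠ 0 := by simp
    have := val_lt (u : ZMod p)
    rw [mem_Icc]; omega
  · rw [mem_Icc] at hm
    rw [Units.val_mk0, val_intCast, Int.emod_eq_of_lt (by omega) (by omega)]
  · ext; simp

theorem prod_Icc_prod_Icc_intCast_eq_prod_units (p : ℕ) [Fact p.Prime] {M : Type*} [CommMonoid M]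
    (f : ZMod p → ZMod p → M) :
    ∏ n ∈ Icc (1 : ℤ) (p - 1), ∏ m ∈ Icc (1 : ℤ) (p - 1), f m n
      = ∏ b : (ZMod p)ˣ, ∏ a : (ZMod p)ˣ, f a b := by
  rw [prod_Icc_intCast_eq_prod_units p fun b => ∏ m ∈ Icc (1 : ℤ) (p - 1), f m b]
  exact Fintype.prod_congr _ _ fun b => prod_Icc_intCast_eq_prod_units p (f · b)

end ZMod

theorem intCast_dvd_sq_sub_mul_sq_iff (p : ℕ) {d : ℤ} {e : ZMod p} (he : e * e = d) (m n : ℤ) :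
    (p : ℤ) ∣ m ^ 2 - d * n ^ 2 ↔ (m : ZMod p) ^ 2 = ((n : ZMod p) * e) ^ 2 := by
  rw [← ZMod.intCast_zmod_eq_zero_iff_dvd, Int.cast_sub, sub_eq_zero]
  push_cast
  rw [← he]
  ring_nf

theorem map_lift_prod_X_sub_C (p : ℕ) [Fact p.Prime] (h2 : (2 : ZMod p) ≠ 0) (d : ℤ)
    {e : ZMod p} (he : e * e = d) (he0 : e ≠ 0) :
    Polynomial.map (Zsqrtd.lift ⟨e, he⟩)
      (∏ mn ∈ (Icc (1 : ℤ) ((p : ℤ) - 1) ×ˢ Icc (1 : ℤ) ((p : ℤ) - 1)).filter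
          (fun mn => (p : ℤ) ∣ (mn.1 ^ 2 - d * mn.2 ^ 2)),
        (X - C (⟨mn.1, mn.2⟩ : Zsqrtd d)))
      = X ^ (p - 1) * (X ^ (p - 1) - 1) := by
  rw [Polynomial.map_prod, prod_filter, prod_product]
  simp only [Polynomial.map_sub, map_X, map_C, Zsqrtd.lift_apply_apply,
    intCast_dvd_sq_sub_mul_sq_iff p he]
  rw [prod_comm, ZMod.prod_Icc_prod_Icc_intCast_eq_prod_units p fun a b =>
    if a ^ 2 = (b * e) ^ 2 then X - C (a + b * e) else 1]
  simpa using prod_prod_ite_sq_eq_X_sub_C h2 (Units.mk0 e he0)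

theorem stmt_6 (p : ℕ) [Fact p.Prime] (hodd : Odd p) (d : ℤ) (hd : ¬ (p : ℤ) ∣ d)
    (hleg : legendreSym p d = 1) :
    (p : (Zsqrtd d)[X]) ∣
      (∏ mn ∈ (Finset.Icc (1 : ℤ) ((p : ℤ) - 1) ×ˢ Finset.Icc (1 : ℤ) ((p : ℤ) - 1)).filter
          (fun mn => (p : ℤ) ∣ (mn.1 ^ 2 - d * mn.2 ^ 2)),
        (X - C (⟨mn.1, mn.2⟩ : Zsqrtd d)))
      - X ^ (p - 1) * (X ^ (p - 1) - 1) := by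
  have hd0 : (d : ZMod p) ≠ 0 := by rwa [Ne, ZMod.intCast_zmod_eq_zero_iff_dvd]
  obtain ⟨c, hc⟩ := (legendreSym.eq_one_iff p hd0).mp hleg
  have hc0 : c ≠ 0 := by rintro rfl; exact hd0 (by simpa using hc)
  have h2 : (2 : ZMod p) ≠ 0 :=
    Ring.two_ne_zero (by rw [ZMod.ringChar_zmod_n]; rintro rfl; norm_num at hodd)
  refine Zsqrtd.natCast_dvd_of_map_lift_eq_zero_s6 hc.symm (mul_ne_zero h2 hc0).isUnit ?_ ?_
  · rw [Polynomial.map_sub, map_lift_prod_X_sub_C p h2 d hc.symm hc0]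
    simp
  · rw [Polynomial.map_sub, map_lift_prod_X_sub_C p h2 d _ (neg_ne_zero.mpr hc0)]
    simp
end

section
/- Let p ≥ 5 be a prime and d an integer with p ∤ d, and let j, k be nonnegative integers with j + k = 6. Then ∑_{m=1}^{p−1} ∑_{n=1}^{p−1} m^j n^k (dm² − n²)^{p−3} (dn² − m²)^{p−3} ≡ 0 (mod p). -/
open Finset

/-!
Working in `ZMod p`, the summand is homogeneous in `(m, n)` of degree `j + k + 4 (p - 3) = 4 (p - 1) - 2`,
so replacing `(m, n)` by `(2 m, 2 n)`, which permutes the pairs of nonzero residues, multiplies the sum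
by `2 ^ (4 (p - 1) - 2) = 1 / 4`. Since `4 ≠ 1` in `ZMod p` for `p ≠ 3`, the sum vanishes.
-/

theorem Finset.sum_eq_zero_of_equiv_map_eq_mul {α R : Type*} [Ring R] [NoZeroDivisors R]
    {s : Finset α} {f : α → R} {a : R} (e : α ≃ α) (hs : ∀ x, x ∈ s ↔ e x ∈ s) (ha : a ≠ 1)
    (hf : ∀ x ∈ s, f (e x) = a * f x) : ∑ x ∈ s, f x = 0 := by
  have hinv : ∑ x ∈ s, f x = a * ∑ x ∈ s, f x := calc
    ∑ x ∈ s, f x = ∑ x ∈ s, f (e x) := (sum_equiv e hs fun _ _ => rfl).symm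
    _ = a * ∑ x ∈ s, f x := by rw [mul_sum]; exact sum_congr rfl hf
  have : (a - 1) * ∑ x ∈ s, f x = 0 := by rw [sub_mul, one_mul, ← hinv, sub_self]
  exact (mul_eq_zero.mp this).resolve_left (sub_ne_zero.mpr ha)

theorem sum_ne_zero_sum_ne_zero_eq_zero_of_map_mul {K R : Type*} [GroupWithZero K] [Fintype K]
    [DecidableEq K] [Ring R] [NoZeroDivisors R] {f : K → K → R} {c : K} {a : R} (hc : c ≠ 0)
    (ha : a ≠ 1) (hf : ∀ x y, f (c * x) (c * y) = a * f x y) :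
    ∑ x ∈ univ.erase 0, ∑ y ∈ univ.erase 0, f x y = 0 := by
  rw [← sum_product']
  refine sum_eq_zero_of_equiv_map_eq_mul
    ((Equiv.mulLeft₀ c hc).prodCongr (Equiv.mulLeft₀ c hc)) (fun x => ?_) ha fun x _ => hf _ _
  simp [hc]

theorem ZMod.sum_Icc_intCast {M : Type*} [AddCommMonoid M] (p : ℕ) [NeZero p] (h : ZMod p → M) :
    ∑ m ∈ Icc (1 : ℤ) (p - 1), h m = ∑ x ∈ univ.erase 0, h x := by
  refine sum_nbij' (fun m => (m : ZMod p)) (fun x => (x.val : ℤ)) ?_ ?_ ?_ ?_ fun _ _ => rfl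
  · intro m hm
    simp only [mem_Icc] at hm
    simp only [mem_erase, mem_univ, and_true, ne_eq, ZMod.intCast_zmod_eq_zero_iff_dvd]
    intro hdvd
    have := Int.le_of_dvd (by omega) hdvd
    omega
  · intro x hx
    simp only [mem_erase, mem_univ, and_true] at hx
    have hlt := ZMod.val_lt x
    have hpos : x.val ≠ 0 := (ZMod.val_ne_zero x).mpr hx
    simp only [mem_Icc]
    omega
  · intro m hm
    simp only [mem_Icc] at hm
    simp only [ZMod.val_intCast]
    exact Int.emod_eq_of_lt (by omega) (by omega)
  · intro x _
    simp

theorem ZMod.sum_Icc_sum_Icc_intCast {M : Type*} [AddCommMonoid M] (p : ℕ) [NeZero p]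
    (h : ZMod p → ZMod p → M) :
    ∑ m ∈ Icc (1 : ℤ) (p - 1), ∑ n ∈ Icc (1 : ℤ) (p - 1), h m n
      = ∑ x ∈ univ.erase 0, ∑ y ∈ univ.erase 0, h x y := by
  simp only [ZMod.sum_Icc_intCast p (h _)]
  exact ZMod.sum_Icc_intCast p fun x => ∑ y ∈ univ.erase 0, h x y

theorem ZMod.natCast_ne_zero_of_lt {p n : ℕ} (hn : n ≠ 0) (hnp : n < p) : (n : ZMod p) ≠ 0 :=
  fun h => hn (Nat.eq_zero_of_dvd_of_lt ((ZMod.natCast_eq_zero_iff n p).mp h) hnp)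

theorem summand_mul_mul_eq_pow_mul {R : Type*} [CommRing R] (d c x y : R) (j k r : ℕ) :
    (c * x) ^ j * (c * y) ^ k * (d * (c * x) ^ 2 - (c * y) ^ 2) ^ r
        * (d * (c * y) ^ 2 - (c * x) ^ 2) ^ r
      = c ^ (j + k + 4 * r) * (x ^ j * y ^ k * (d * x ^ 2 - y ^ 2) ^ r * (d * y ^ 2 - x ^ 2) ^ r) := by
  rw [show d * (c * x) ^ 2 - (c * y) ^ 2 = c ^ 2 * (d * x ^ 2 - y ^ 2) by ring,
    show d * (c * y) ^ 2 - (c * x) ^ 2 = c ^ 2 * (d * y ^ 2 - x ^ 2) by ring]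
  simp only [mul_pow, ← pow_mul]
  ring

theorem stmt_9_general (p : ℕ) (hp : p.Prime) (hp5 : 5 ≤ p) (d : ℤ)
    (j k : ℕ) (hjk : j + k = 6) :
    (p : ℤ) ∣ ∑ m ∈ Finset.Icc (1 : ℤ) ((p : ℤ) - 1), ∑ n ∈ Finset.Icc (1 : ℤ) ((p : ℤ) - 1),
      m ^ j * n ^ k * (d * m ^ 2 - n ^ 2) ^ (p - 3) * (d * n ^ 2 - m ^ 2) ^ (p - 3) := by
  have : Fact p.Prime := ⟨hp⟩
  have h2 : (2 : ZMod p) ≠ 0 := by exact_mod_cast ZMod.natCast_ne_zero_of_lt two_ne_zero (by omega)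
  have h3 : (3 : ZMod p) ≠ 0 := by exact_mod_cast ZMod.natCast_ne_zero_of_lt three_ne_zero (by omega)
  have hscale : (2 : ZMod p) ^ (j + k + 4 * (p - 3)) * 4 = 1 := by
    rw [show (4 : ZMod p) = 2 ^ 2 by norm_num, ← pow_add,
      show j + k + 4 * (p - 3) + 2 = (p - 1) * 4 by omega, pow_mul,
      ZMod.pow_card_sub_one_eq_one h2, one_pow]
  have hne : (2 : ZMod p) ^ (j + k + 4 * (p - 3)) ≠ 1 := by
    intro h
    rw [h, one_mul] at hscale
    exact h3 (by linear_combination hscale)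
  rw [← ZMod.intCast_zmod_eq_zero_iff_dvd]
  push_cast
  exact (ZMod.sum_Icc_sum_Icc_intCast p _).trans <| sum_ne_zero_sum_ne_zero_eq_zero_of_map_mul
    (f := fun x y => x ^ j * y ^ k * ((d : ZMod p) * x ^ 2 - y ^ 2) ^ (p - 3)
      * (d * y ^ 2 - x ^ 2) ^ (p - 3)) h2 hne fun x y => summand_mul_mul_eq_pow_mul _ _ _ _ _ _ _

theorem stmt_9 (p : ℕ) (hp : p.Prime) (hp5 : 5 ≤ p) (d : ℤ) (hd : ¬ (p : ℤ) ∣ d)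
    (j k : ℕ) (hjk : j + k = 6) :
    (p : ℤ) ∣ ∑ m ∈ Finset.Icc (1 : ℤ) ((p : ℤ) - 1), ∑ n ∈ Finset.Icc (1 : ℤ) ((p : ℤ) - 1),
      m ^ j * n ^ k * (d * m ^ 2 - n ^ 2) ^ (p - 3) * (d * n ^ 2 - m ^ 2) ^ (p - 3) :=
  stmt_9_general p hp hp5 d j k hjk
end

section
/- Let p ≥ 5 be a prime and d an integer with p ∤ d, and set f(d,m,n) = −2dm⁶ − 2d²m⁶ − 2m⁴n² + 4dm⁴n² + 4d²m⁴n² − 2d³m⁴n² − 2m²n⁴ + 4dm²n⁴ + 4d²m²n⁴ − 2d³m²n⁴ − 2dn⁶ − 2d²n⁶. Then ∑_{m=1}^{p−1} ∑_{n=1}^{p−1} f(d,m,n)·(dm² − n²)^{p−3}·(dn² − m²)^{p−3} ≡ 0 (mod p). -/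
/-!
The summand is a form of degree `6 + 4 (p - 3) = 4p - 6` in `(m, n)`. Modulo `p`, the substitution
`(m, n) ↦ (2m, 2n)` permutes the pairs of nonzero residues, so it leaves the sum `S` unchanged, while
it multiplies every term by `2 ^ (4p - 6) = 2 ^ (-2)` (Fermat). Hence `4S = S`, and `3S = 0` forces
`S = 0` since `p ≠ 3`.
-/

open Finset

theorem sum_Icc_intCast_eq_sum_ne_zero {p : ℕ} [NeZero p] {M : Type*} [AddCommMonoid M]
    (h : ZMod p → M) :
    ∑ m ∈ Icc (1 : ℤ) (p - 1), h m = ∑ x ∈ univ.filter (· ≠ 0), h x := by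
  refine sum_nbij' (fun m ↦ (m : ZMod p)) (fun x ↦ (x.val : ℤ)) ?_ ?_ ?_ ?_ (fun _ _ ↦ rfl)
  · intro m hm
    simp only [mem_Icc] at hm
    simp only [mem_filter, mem_univ, true_and, ne_eq, ZMod.intCast_zmod_eq_zero_iff_dvd]
    exact fun hdvd ↦ absurd (Int.le_of_dvd (by omega) hdvd) (by omega)
  · intro x hx
    have hx0 : x.val ≠ 0 := by simpa [ZMod.val_eq_zero] using hx
    have := x.val_lt
    simp only [mem_Icc]
    omega
  · intro m hm
    simp only [mem_Icc] at hm
    rw [ZMod.val_intCast, Int.emod_eq_of_lt (by omega) (by omega)]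
  · intro x _
    simp

theorem sum_Icc_sum_Icc_intCast_eq_sum_ne_zero {p : ℕ} [NeZero p] {M : Type*} [AddCommMonoid M]
    (h : ZMod p → ZMod p → M) :
    ∑ m ∈ Icc (1 : ℤ) (p - 1), ∑ n ∈ Icc (1 : ℤ) (p - 1), h m n =
      ∑ x ∈ univ.filter (· ≠ 0), ∑ y ∈ univ.filter (· ≠ 0), h x y := by
  simp_rw [sum_Icc_intCast_eq_sum_ne_zero]
  exact sum_Icc_intCast_eq_sum_ne_zero fun x ↦ ∑ y ∈ univ.filter (· ≠ 0), h x y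

section Homogeneous

variable {K : Type*} [Field K] [Fintype K] [DecidableEq K]

theorem sum_sum_ne_zero_eq_zero_of_map_mul {g : K → K → K} {c a : K} (hc : c ≠ 0) (ha : a ≠ 1)
    (hg : ∀ x y, g (c * x) (c * y) = a * g x y) :
    ∑ x ∈ univ.filter (· ≠ 0), ∑ y ∈ univ.filter (· ≠ 0), g x y = 0 := by
  have hperm : ∀ x : K, x ∈ univ.filter (· ≠ 0) ↔ Equiv.mulLeft₀ c hc x ∈ univ.filter (· ≠ 0) := by
    simp [hc]
  have hreindex : ∑ x ∈ univ.filter (· ≠ 0), ∑ y ∈ univ.filter (· ≠ 0), g (c * x) (c * y) =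
      ∑ x ∈ univ.filter (· ≠ 0), ∑ y ∈ univ.filter (· ≠ 0), g x y :=
    sum_equiv _ hperm fun x _ ↦ sum_equiv _ hperm fun y _ ↦ rfl
  simp_rw [hg, ← mul_sum] at hreindex
  have hzero : (a - 1) * ∑ x ∈ univ.filter (· ≠ 0), ∑ y ∈ univ.filter (· ≠ 0), g x y = 0 := by
    linear_combination hreindex
  exact (mul_eq_zero.mp hzero).resolve_left (sub_ne_zero.mpr ha)

end Homogeneous

section Summand

variable {R : Type*} [CommRing R]

def sexticForm (d x y : R) : R :=
  -2 * d * x ^ 6 - 2 * d ^ 2 * x ^ 6 - 2 * x ^ 4 * y ^ 2 + 4 * d * x ^ 4 * y ^ 2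
    + 4 * d ^ 2 * x ^ 4 * y ^ 2 - 2 * d ^ 3 * x ^ 4 * y ^ 2 - 2 * x ^ 2 * y ^ 4
    + 4 * d * x ^ 2 * y ^ 4 + 4 * d ^ 2 * x ^ 2 * y ^ 4 - 2 * d ^ 3 * x ^ 2 * y ^ 4
    - 2 * d * y ^ 6 - 2 * d ^ 2 * y ^ 6

def summand (e : ℕ) (d x y : R) : R :=
  sexticForm d x y * (d * x ^ 2 - y ^ 2) ^ e * (d * y ^ 2 - x ^ 2) ^ e

theorem sexticForm_mul_mul (c d x y : R) :
    sexticForm d (c * x) (c * y) = c ^ 6 * sexticForm d x y := by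
  unfold sexticForm
  ring

theorem summand_mul_mul (e : ℕ) (c d x y : R) :
    summand e d (c * x) (c * y) = c ^ (6 + 4 * e) * summand e d x y := by
  have hx : d * (c * x) ^ 2 - (c * y) ^ 2 = c ^ 2 * (d * x ^ 2 - y ^ 2) := by ring
  have hy : d * (c * y) ^ 2 - (c * x) ^ 2 = c ^ 2 * (d * y ^ 2 - x ^ 2) := by ring
  rw [summand, summand, sexticForm_mul_mul, hx, hy, mul_pow, mul_pow]
  ring

end Summand

theorem ZMod.natCast_ne_zero_of_pos_of_lt {p n : ℕ} (hn0 : 0 < n) (hnp : n < p) :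
    (n : ZMod p) ≠ 0 := fun h ↦
  absurd (Nat.le_of_dvd hn0 ((ZMod.natCast_eq_zero_iff n p).mp h)) (by omega)

theorem two_pow_six_add_four_mul_ne_one {p : ℕ} [Fact p.Prime] (hp5 : 5 ≤ p) :
    (2 : ZMod p) ^ (6 + 4 * (p - 3)) ≠ 1 := by
  intro h
  have hfermat : (2 : ZMod p) ^ (p - 1) = 1 := ZMod.pow_card_sub_one_eq_one <| by
    exact_mod_cast ZMod.natCast_ne_zero_of_pos_of_lt (p := p) (n := 2) (by norm_num) (by omega)
  have hfour : (2 : ZMod p) ^ (6 + 4 * (p - 3)) * 2 ^ 2 = (2 ^ (p - 1)) ^ 4 := by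
    rw [← pow_add, ← pow_mul]
    congr 1
    omega
  rw [h, hfermat] at hfour
  refine ZMod.natCast_ne_zero_of_pos_of_lt (p := p) (n := 3) (by norm_num) (by omega) ?_
  push_cast
  linear_combination hfour

theorem stmt_10_general (p : ℕ) (hp : p.Prime) (hp5 : 5 ≤ p) (d : ℤ) :
    (p : ℤ) ∣ ∑ m ∈ Finset.Icc (1 : ℤ) ((p : ℤ) - 1), ∑ n ∈ Finset.Icc (1 : ℤ) ((p : ℤ) - 1),
      (-2 * d * m ^ 6 - 2 * d ^ 2 * m ^ 6 - 2 * m ^ 4 * n ^ 2 + 4 * d * m ^ 4 * n ^ 2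
        + 4 * d ^ 2 * m ^ 4 * n ^ 2 - 2 * d ^ 3 * m ^ 4 * n ^ 2 - 2 * m ^ 2 * n ^ 4
        + 4 * d * m ^ 2 * n ^ 4 + 4 * d ^ 2 * m ^ 2 * n ^ 4 - 2 * d ^ 3 * m ^ 2 * n ^ 4
        - 2 * d * n ^ 6 - 2 * d ^ 2 * n ^ 6)
      * (d * m ^ 2 - n ^ 2) ^ (p - 3) * (d * n ^ 2 - m ^ 2) ^ (p - 3) := by
  have := Fact.mk hp
  rw [← ZMod.intCast_zmod_eq_zero_iff_dvd]
  push_cast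
  change ∑ m ∈ Icc (1 : ℤ) (p - 1), ∑ n ∈ Icc (1 : ℤ) (p - 1),
    summand (p - 3) (d : ZMod p) m n = 0
  rw [sum_Icc_sum_Icc_intCast_eq_sum_ne_zero (summand (p - 3) (d : ZMod p))]
  have htwo : (2 : ZMod p) ≠ 0 := by
    exact_mod_cast ZMod.natCast_ne_zero_of_pos_of_lt (p := p) (n := 2) (by norm_num) (by omega)
  exact sum_sum_ne_zero_eq_zero_of_map_mul htwo (two_pow_six_add_four_mul_ne_one hp5) (summand_mul_mul _ _ _)

theorem stmt_10 (p : ℕ) (hp : p.Prime) (hp5 : 5 ≤ p) (d : ℤ) (hd : ¬ (p : ℤ) ∣ d) :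
    (p : ℤ) ∣ ∑ m ∈ Finset.Icc (1 : ℤ) ((p : ℤ) - 1), ∑ n ∈ Finset.Icc (1 : ℤ) ((p : ℤ) - 1),
      (-2 * d * m ^ 6 - 2 * d ^ 2 * m ^ 6 - 2 * m ^ 4 * n ^ 2 + 4 * d * m ^ 4 * n ^ 2
        + 4 * d ^ 2 * m ^ 4 * n ^ 2 - 2 * d ^ 3 * m ^ 4 * n ^ 2 - 2 * m ^ 2 * n ^ 4
        + 4 * d * m ^ 2 * n ^ 4 + 4 * d ^ 2 * m ^ 2 * n ^ 4 - 2 * d ^ 3 * m ^ 2 * n ^ 4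
        - 2 * d * n ^ 6 - 2 * d ^ 2 * n ^ 6)
      * (d * m ^ 2 - n ^ 2) ^ (p - 3) * (d * n ^ 2 - m ^ 2) ^ (p - 3) :=
  stmt_10_general p hp hp5 d
end

section
/- Let p be a prime with p ≡ 3 (mod 4). Then in ℤ[i][X] the polynomial g_p(x) = ∏_{1 ≤ m,n ≤ p−1, p ∤ m²+n²} (x − (m + ni)) satisfies g_p(x) ≡ 1 + x^{2(p−1)} + x^{4(p−1)} + ⋯ + x^{(p−1)²} = ∑_{k=0}^{(p−1)/2} x^{2k(p−1)} (mod p). (When p ≡ 3 (mod 4), the condition p ∤ m²+n² holds automatically for all 1 ≤ m,n ≤ p−1.) -/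
open Polynomial Finset

/-!
Send `i` to a root `I` of `X² + 1` in a field of characteristic `p`. Since `p ≡ 3 (mod 4)`, `-1`
is not a square mod `p`, so the kernel of `ℤ[i] → K` is `(p)` and the `p²` elements `a + bI`
(`a, b ∈ 𝔽_p`) are distinct. Frobenius acts on them as conjugation `a + bI ↦ a - bI`, so they are
the roots of `X^(p²) - X`. The points with `b = 0` contribute `X^p - X = X (X^(p-1) - 1)` and
those with `a = 0 ≠ b` contribute `X^(p-1) + 1`, so the product over `a, b ≠ 0` is
`(X^(p²-1) - 1) / (X^(2(p-1)) - 1)`, the geometric sum on the right.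
-/

namespace ZMod

variable {p : ℕ} [Fact p.Prime]

theorem sq_add_sq_eq_zero_iff (hp3 : p % 4 = 3) {a b : ZMod p} :
    a ^ 2 + b ^ 2 = 0 ↔ a = 0 ∧ b = 0 := by
  refine ⟨fun h => ?_, fun ⟨ha, hb⟩ => by simp [ha, hb]⟩
  obtain rfl : b = 0 := by
    by_contra hb
    exact mod_four_ne_three_of_sq_eq_neg_sq' hb (eq_neg_of_add_eq_zero_left h) hp3
  simpa using h

theorem bijOn_intCast_Icc (n : ℕ) [NeZero n] :
    Set.BijOn (Int.cast : ℤ → ZMod n) (Icc 1 ((n : ℤ) - 1) : Finset ℤ)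
      (univ.erase 0 : Finset (ZMod n)) := by
  refine ⟨fun m hm => ?_, fun m hm m' hm' h => ?_, fun a ha => ?_⟩
  · simp only [coe_Icc, Set.mem_Icc, coe_erase, coe_univ, Set.mem_sdiff, Set.mem_univ,
      Set.mem_singleton_iff, true_and] at hm ⊢
    rw [intCast_zmod_eq_zero_iff_dvd]
    exact fun hd => absurd (Int.le_of_dvd (by omega) hd) (by omega)
  · simp only [coe_Icc, Set.mem_Icc] at hm hm'
    rwa [intCast_eq_intCast_iff', Int.emod_eq_of_lt, Int.emod_eq_of_lt] at h <;> omega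
  · simp only [coe_erase, coe_univ, Set.mem_sdiff, Set.mem_univ, Set.mem_singleton_iff,
      true_and] at ha
    have := val_lt a
    have := (val_ne_zero a).2 ha
    exact ⟨a.val, by simp only [coe_Icc, Set.mem_Icc]; omega, by simp⟩

end ZMod

theorem Int.not_dvd_sq_add_sq_of_not_dvd {p : ℕ} [Fact p.Prime] (hp3 : p % 4 = 3) {m : ℤ}
    (hm : ¬ (p : ℤ) ∣ m) (n : ℤ) : ¬ (p : ℤ) ∣ m ^ 2 + n ^ 2 := by
  rw [← ZMod.intCast_zmod_eq_zero_iff_dvd] at hm ⊢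
  push_cast
  rw [ZMod.sq_add_sq_eq_zero_iff hp3]
  exact fun h => hm h.1

theorem pow_pred_eq_neg_one_of_sq_eq_neg_one {R : Type*} [Monoid R] [HasDistribNeg R] {n : ℕ}
    (hn : n % 4 = 3) {I : R} (hI : I ^ 2 = -1) : I ^ (n - 1) = -1 := by
  have hodd : Odd ((n - 1) / 2) := Nat.odd_iff.2 (by omega)
  rw [show n - 1 = 2 * ((n - 1) / 2) by omega, pow_mul, hI, hodd.neg_one_pow]

theorem Odd.sum_range_pow_mul_sub_one_eq_pow_sq_sub_one {R : Type*} [CommRing R] {n : ℕ}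
    (hn : Odd n) (x : R) :
    (∑ k ∈ range ((n - 1) / 2 + 1), x ^ (2 * k * (n - 1))) * (x ^ (2 * (n - 1)) - 1) =
      x ^ (n ^ 2 - 1) - 1 := by
  have hexp : n ^ 2 - 1 = 2 * (n - 1) * ((n - 1) / 2 + 1) := by
    obtain ⟨m, rfl⟩ := hn
    simp only [Nat.add_sub_cancel, Nat.mul_div_cancel_left m two_pos]
    ring_nf; omega
  rw [hexp, pow_mul x (2 * (n - 1)), ← geom_sum_mul (x ^ (2 * (n - 1))) ((n - 1) / 2 + 1)]
  congr 1
  exact Finset.sum_congr rfl fun k _ => by rw [mul_right_comm, pow_mul]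

theorem Fintype.prod_prod_type_eq_mul_prod_erase {α β M : Type*} [Fintype α] [Fintype β]
    [DecidableEq α] [DecidableEq β] [CommMonoid M] (f : α × β → M) (a₀ : α) (b₀ : β) :
    ∏ x, f x = (∏ a, f (a, b₀)) * (∏ b ∈ univ.erase b₀, f (a₀, b)) *
      ∏ x ∈ univ.erase a₀ ×ˢ univ.erase b₀, f x := by
  rw [Fintype.prod_prod_type_right, ← mul_prod_erase univ _ (mem_univ b₀), prod_product_right,
    mul_assoc, ← prod_mul_distrib]
  exact congrArg _ (Finset.prod_congr rfl fun b _ => (mul_prod_erase univ _ (mem_univ a₀)).symm)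

namespace Polynomial

theorem prod_X_sub_C_eq_of_isRoot {K ι : Type*} [Field K] {s : Finset ι} {x : ι → K}
    (hx : Set.InjOn x s) {P : K[X]} (hP : P.Monic) (hdeg : P.natDegree = #s)
    (hroot : ∀ i ∈ s, P.IsRoot (x i)) : ∏ i ∈ s, (X - C (x i)) = P := by
  refine (eq_of_monic_of_dvd_of_natDegree_le
    (monic_prod_of_monic _ _ fun i _ => monic_X_sub_C (x i)) hP ?_ (by simp [hdeg])).symm
  refine prod_dvd_of_coprime (fun i hi j hj hij => ?_) fun i hi => dvd_iff_isRoot.2 (hroot i hi)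
  exact isCoprime_X_sub_C_of_isUnit_sub (sub_ne_zero.2 (hx.ne hi hj hij)).isUnit

theorem C_dvd_iff_map_eq_zero {R S : Type*} [CommRing R] [CommRing S] (f : R →+* S) (r : R)
    (hr : ∀ r' : R, f r' = 0 ↔ r ∣ r') (P : R[X]) : C r ∣ P ↔ P.map f = 0 := by
  simp_rw [C_dvd_iff_dvd_coeff, ← hr, Polynomial.ext_iff, coeff_map, coeff_zero]

end Polynomial

section GaussianPoints

variable {p : ℕ} [Fact p.Prime] {K : Type*} [Field K] [Algebra (ZMod p) K]

local notation "ι" => algebraMap (ZMod p) K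

theorem prod_erase_zero_X_sub_C_algebraMap_mul {c : K} (hc : c ≠ 0) :
    ∏ a ∈ univ.erase (0 : ZMod p), (X - C (ι a * c)) = X ^ (p - 1) - C (c ^ (p - 1)) := by
  have hp1 : p - 1 ≠ 0 := (Nat.sub_pos_of_lt (Fact.out : p.Prime).one_lt).ne'
  refine prod_X_sub_C_eq_of_isRoot (fun a _ b _ h => (algebraMap (ZMod p) K).injective
    (mul_right_cancel₀ hc h)) (monic_X_pow_sub_C _ hp1) ?_ fun a ha => ?_
  · rw [natDegree_X_pow_sub_C, card_erase_of_mem (mem_univ _), card_univ, ZMod.card]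
  · simp [mul_pow, ← map_pow, ZMod.pow_card_sub_one_eq_one (ne_of_mem_erase ha)]

variable (hp3 : p % 4 = 3) {I : K} (hI : I ^ 2 = -1)
include hp3 hI

theorem algebraMap_add_algebraMap_mul_eq_zero_iff {a b : ZMod p} :
    ι a + ι b * I = 0 ↔ a = 0 ∧ b = 0 := by
  refine ⟨fun h => ?_, fun ⟨ha, hb⟩ => by simp [ha, hb]⟩
  have hnorm : ι (a ^ 2 + b ^ 2) = (ι a + ι b * I) * (ι a - ι b * I) := by
    simp only [map_add, map_pow]
    linear_combination (ι b) ^ 2 * hI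
  rwa [h, zero_mul, map_eq_zero_iff _ (algebraMap (ZMod p) K).injective,
    ZMod.sq_add_sq_eq_zero_iff hp3] at hnorm

theorem injective_algebraMap_add_algebraMap_mul :
    Function.Injective fun ab : ZMod p × ZMod p => ι ab.1 + ι ab.2 * I := by
  rintro ⟨a, b⟩ ⟨a', b'⟩ h
  have h0 : ι (a - a') + ι (b - b') * I = 0 := by
    simp only [map_sub]
    linear_combination h
  obtain ⟨ha, hb⟩ := (algebraMap_add_algebraMap_mul_eq_zero_iff hp3 hI).1 h0
  rw [sub_eq_zero] at ha hb
  rw [ha, hb]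

theorem algebraMap_add_algebraMap_mul_pow_prime (a b : ZMod p) :
    (ι a + ι b * I) ^ p = ι a - ι b * I := by
  have := charP_of_injective_algebraMap (algebraMap (ZMod p) K).injective p
  have hIp : I ^ p = -I := by
    rw [← Nat.sub_add_cancel (Fact.out : p.Prime).one_le, pow_succ,
      pow_pred_eq_neg_one_of_sq_eq_neg_one hp3 hI, neg_one_mul]
  rw [add_pow_char, mul_pow, ← map_pow, ← map_pow, ZMod.pow_card, ZMod.pow_card, hIp]
  ring

theorem algebraMap_add_algebraMap_mul_pow_sq (a b : ZMod p) :
    (ι a + ι b * I) ^ (p ^ 2) = ι a + ι b * I := by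
  rw [sq, pow_mul, algebraMap_add_algebraMap_mul_pow_prime hp3 hI, sub_eq_add_neg, ← neg_mul,
    ← map_neg, algebraMap_add_algebraMap_mul_pow_prime hp3 hI, map_neg, neg_mul, sub_neg_eq_add]

theorem prod_univ_X_sub_C_algebraMap_add_mul :
    ∏ ab : ZMod p × ZMod p, (X - C (ι ab.1 + ι ab.2 * I)) = X ^ (p ^ 2) - X := by
  have hp : 1 < p ^ 2 := Nat.one_lt_pow two_ne_zero (Fact.out : p.Prime).one_lt
  refine prod_X_sub_C_eq_of_isRoot (injective_algebraMap_add_algebraMap_mul hp3 hI).injOn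
    (monic_X_pow_sub (by rw [degree_X]; exact_mod_cast hp)) ?_ fun ab _ => ?_
  · rw [FiniteField.X_pow_card_sub_X_natDegree_eq K hp, card_univ, Fintype.card_prod, ZMod.card,
      sq]
  · simp [algebraMap_add_algebraMap_mul_pow_sq hp3 hI]

theorem prod_erase_zero_X_sub_C_algebraMap_add_mul :
    ∏ ab ∈ univ.erase 0 ×ˢ univ.erase 0, (X - C (ι ab.1 + ι ab.2 * I)) =
      ∑ k ∈ range ((p - 1) / 2 + 1), (X : K[X]) ^ (2 * k * (p - 1)) := by
  have hrow : ∏ a, (X - C (ι a + ι 0 * I)) = X * (X ^ (p - 1) - 1) := by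
    rw [← mul_prod_erase univ _ (mem_univ 0)]
    simpa using prod_erase_zero_X_sub_C_algebraMap_mul (p := p) (one_ne_zero' K)
  have hcol : ∏ b ∈ univ.erase 0, (X - C (ι 0 + ι b * I)) = X ^ (p - 1) + 1 := by
    have hI0 : I ≠ 0 := by rintro rfl; simp at hI
    simpa [pow_pred_eq_neg_one_of_sq_eq_neg_one hp3 hI] using
      prod_erase_zero_X_sub_C_algebraMap_mul (p := p) hI0
  have hfull := prod_univ_X_sub_C_algebraMap_add_mul hp3 hI
  rw [Fintype.prod_prod_type_eq_mul_prod_erase _ 0 0, hrow, hcol] at hfull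
  have hgeom := Odd.sum_range_pow_mul_sub_one_eq_pow_sq_sub_one (n := p)
    (Nat.odd_iff.2 (by omega)) (X : K[X])
  have hX : (X : K[X]) ^ (p ^ 2) - X = X * (X ^ (p ^ 2 - 1) - 1) := by
    rw [mul_sub, mul_one, ← pow_succ',
      Nat.sub_add_cancel (Nat.one_le_pow _ _ (Fact.out : p.Prime).pos)]
  have hne : (X : K[X]) * (X ^ (2 * (p - 1)) - 1) ≠ 0 :=
    mul_ne_zero X_ne_zero (X_pow_sub_C_ne_zero (by have := (Fact.out : p.Prime).two_le; omega) 1)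
  refine mul_left_cancel₀ hne ?_
  linear_combination hfull - X * hgeom + hX

end GaussianPoints

theorem GaussianInt.lift_eq_zero_iff {p : ℕ} [Fact p.Prime] (hp3 : p % 4 = 3) {K : Type*}
    [Field K] [Algebra (ZMod p) K] (I : {I : K // I * I = ↑(-1 : ℤ)}) (z : GaussianInt) :
    Zsqrtd.lift I z = 0 ↔ (p : GaussianInt) ∣ z := by
  have hI : (I : K) ^ 2 = -1 := by rw [sq, I.2, Int.cast_neg, Int.cast_one]
  rw [Zsqrtd.lift_apply_apply, ← map_intCast (algebraMap (ZMod p) K),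
    ← map_intCast (algebraMap (ZMod p) K), algebraMap_add_algebraMap_mul_eq_zero_iff hp3 hI,
    ZMod.intCast_zmod_eq_zero_iff_dvd, ZMod.intCast_zmod_eq_zero_iff_dvd, ← Zsqrtd.intCast_dvd,
    Int.cast_natCast]

theorem stmt_12 (p : ℕ) (hp : p.Prime) (hp3 : p % 4 = 3) :
    (p : GaussianInt[X]) ∣
      (∏ mn ∈ (Finset.Icc (1 : ℤ) ((p : ℤ) - 1) ×ˢ Finset.Icc (1 : ℤ) ((p : ℤ) - 1)).filter
          (fun mn => ¬ (p : ℤ) ∣ (mn.1 ^ 2 + mn.2 ^ 2)),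
        (X - C (⟨mn.1, mn.2⟩ : GaussianInt)))
      - ∑ k ∈ Finset.range ((p - 1) / 2 + 1), X ^ (2 * k * (p - 1)) := by
  have : Fact p.Prime := ⟨hp⟩
  obtain ⟨I, hI⟩ := IsAlgClosed.exists_eq_mul_self (-1 : AlgebraicClosure (ZMod p))
  have hI' : I * I = ↑(-1 : ℤ) := by rw [← hI, Int.cast_neg, Int.cast_one]
  have hunits := ZMod.bijOn_intCast_Icc p
  have hcoprime : ∀ mn ∈ Icc 1 ((p : ℤ) - 1) ×ˢ Icc 1 ((p : ℤ) - 1),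
      ¬ (p : ℤ) ∣ mn.1 ^ 2 + mn.2 ^ 2 := fun mn hmn =>
    Int.not_dvd_sq_add_sq_of_not_dvd hp3 (by
      rw [← ZMod.intCast_zmod_eq_zero_iff_dvd]
      exact ne_of_mem_erase (hunits.mapsTo (mem_product.1 hmn).1)) _
  have hpairs := hunits.prodMap hunits
  rw [← coe_product, ← coe_product] at hpairs
  rw [← C_eq_natCast, C_dvd_iff_map_eq_zero _ _ (GaussianInt.lift_eq_zero_iff hp3 ⟨I, hI'⟩),
    filter_true_of_mem hcoprime, Polynomial.map_sub, sub_eq_zero, Polynomial.map_prod,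
    Polynomial.map_sum]
  simp only [Polynomial.map_sub, Polynomial.map_pow, map_X, map_C, Zsqrtd.lift_apply_apply]
  rw [← prod_erase_zero_X_sub_C_algebraMap_add_mul hp3 (by rw [hI, sq])]
  exact prod_nbij _ hpairs.mapsTo hpairs.injOn hpairs.surjOn fun mn _ => by simp
end
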